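/- arXiv:2412.12607 — 5 statements merged into one kernel-verified Lean document; each statement's English description precedes it below -/
import Mathlib

section
/- Let $n\geq 2$, $\gamma\in(0,1)$ and let $A_1,\dots,A_n:\mathcal{H}\rightrightarrows\mathcal{H}$ be maximally $\mu_i$-monotone with $\mu_i\geq 0$. Then for all $\mathbf{z},\bar{\mathbf{z}}\in\mathcal{H}^{n-1}$: $\|T_{\rm MT}(\mathbf{z})-T_{\rm MT}(\bar{\mathbf{z}})\|^2+\gamma(1-\gamma)\sum_{i=1}^{n-1}\|(x_i-x_{i+1})-(\bar x_i-\bar x_{i+1})\|^2+\gamma\|(x_n-x_1)-(\bar x_n-\bar x_1)\|^2 \leq \|\mathbf{z}-\bar{\mathbf{z}}\|^2-2\gamma\sum_{i=1}^n\mu_i\|x_i-\bar x_i\|^2$. -/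
open scoped RealInnerProductSpace

/-- A set-valued operator `A : H → Set H` is `μ`-monotone. -/
def IsMonotoneOp {H : Type*} [NormedAddCommGroup H] [InnerProductSpace ℝ H]
    (A : H → Set H) (μ : ℝ) : Prop :=
  ∀ ⦃x y u v : H⦄, u ∈ A x → v ∈ A y → μ * ‖x - y‖ ^ 2 ≤ ⟪x - y, u - v⟫

/-- `A` is maximally `μ`-monotone. -/
def IsMaxMonotoneOp {H : Type*} [NormedAddCommGroup H] [InnerProductSpace ℝ H]
    (A : H → Set H) (μ : ℝ) : Prop :=
  IsMonotoneOp A μ ∧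
    ∀ B : H → Set H, IsMonotoneOp B μ → (∀ x, A x ⊆ B x) → ∀ x, B x ⊆ A x

lemma mt_key_identity {H : Type*} [NormedAddCommGroup H] [InnerProductSpace ℝ H]
    (d w : ℕ → H) (k : ℕ) :
    2 * (⟪d 0, w 0 - d 0⟫
        + ∑ i ∈ Finset.range k, ⟪d (i+1), (w (i+1) + d i - w i) - d (i+1)⟫
        + ⟪d (k+1), (d 0 + d k - w k) - d (k+1)⟫)
      + 2 * ∑ i ∈ Finset.range (k+1), ⟪w i, d (i+1) - d i⟫
      + ∑ i ∈ Finset.range (k+1), ‖d (i+1) - d i‖ ^ 2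
      + ‖d (k+1) - d 0‖ ^ 2 = 0 := by
  induction k with
  | zero =>
    simp only [Finset.range_zero, Finset.sum_empty, Finset.sum_range_one, zero_add, add_zero]
    simp only [← real_inner_self_eq_norm_sq, inner_sub_left, inner_sub_right,
      inner_add_left, inner_add_right]
    linarith [real_inner_comm (d 0) (w 0), real_inner_comm (d 0) (d 1),
      real_inner_comm (d 1) (w 0)]
  | succ k ih =>
    rw [Finset.sum_range_succ, Finset.sum_range_succ (n := k + 1),
      Finset.sum_range_succ (n := k + 1)]
    simp only [← real_inner_self_eq_norm_sq, inner_sub_left, inner_sub_right,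
      inner_add_left, inner_add_right] at ih ⊢
    linarith [ih,
      real_inner_comm (d 0) (d k), real_inner_comm (d 0) (d (k+1)),
      real_inner_comm (d 0) (d (k+2)), real_inner_comm (d 0) (w k),
      real_inner_comm (d 0) (w (k+1)), real_inner_comm (d k) (d (k+1)),
      real_inner_comm (d k) (d (k+2)), real_inner_comm (d k) (w k),
      real_inner_comm (d k) (w (k+1)), real_inner_comm (d (k+1)) (d (k+2)),
      real_inner_comm (d (k+1)) (w k), real_inner_comm (d (k+1)) (w (k+1)),
      real_inner_comm (d (k+2)) (w k), real_inner_comm (d (k+2)) (w (k+1)),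
      real_inner_comm (w k) (w (k+1))]

/-- **Lemma 3.1**: the key inequality for the Malitsky–Tam operator
`T_MT(z) = z + γ (x₂ - x₁, …, xₙ - xₙ₋₁)`, where the resolvent recursion is encoded by
graph memberships:  `x 0 = J_{A 0}(z 0)`, `x i = J_{A i}(z i + x (i-1) - z (i-1))` for
`1 ≤ i ≤ n-2`, and `x (n-1) = J_{A (n-1)}(x 0 + x (n-2) - z (n-2))`. -/
theorem malitskyTam_key_inequality
    {H : Type*} [NormedAddCommGroup H] [InnerProductSpace ℝ H]
    (n : ℕ) (hn : 2 ≤ n) (γ : ℝ) (hγ : γ ∈ Set.Ioo (0 : ℝ) 1)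
    (A : ℕ → H → Set H) (μ : ℕ → ℝ) (hμ : ∀ i, 0 ≤ μ i)
    (hA : ∀ i, i < n → IsMaxMonotoneOp (A i) (μ i))
    (z zb x xb : ℕ → H)
    (hx0 : z 0 - x 0 ∈ A 0 (x 0))
    (hxi : ∀ i, 1 ≤ i → i ≤ n - 2 → (z i + x (i - 1) - z (i - 1)) - x i ∈ A i (x i))
    (hxn : (x 0 + x (n - 2) - z (n - 2)) - x (n - 1) ∈ A (n - 1) (x (n - 1)))
    (hxb0 : zb 0 - xb 0 ∈ A 0 (xb 0))
    (hxbi : ∀ i, 1 ≤ i → i ≤ n - 2 → (zb i + xb (i - 1) - zb (i - 1)) - xb i ∈ A i (xb i))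
    (hxbn : (xb 0 + xb (n - 2) - zb (n - 2)) - xb (n - 1) ∈ A (n - 1) (xb (n - 1))) :
    (∑ i ∈ Finset.range (n - 1),
        ‖(z i + γ • (x (i + 1) - x i)) - (zb i + γ • (xb (i + 1) - xb i))‖ ^ 2)
      + γ * (1 - γ) * ∑ i ∈ Finset.range (n - 1),
          ‖(x i - x (i + 1)) - (xb i - xb (i + 1))‖ ^ 2
      + γ * ‖(x (n - 1) - x 0) - (xb (n - 1) - xb 0)‖ ^ 2
    ≤ (∑ i ∈ Finset.range (n - 1), ‖z i - zb i‖ ^ 2)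
      - 2 * γ * ∑ i ∈ Finset.range n, μ i * ‖x i - xb i‖ ^ 2 := by
  obtain ⟨hγ0, hγ1⟩ := hγ
  obtain ⟨k, rfl⟩ : ∃ k, n = k + 2 := ⟨n - 2, by omega⟩
  have hk1 : k + 2 - 1 = k + 1 := by omega
  have hk2 : k + 2 - 2 = k := by omega
  rw [hk1] at hxn hxbn ⊢
  rw [hk2] at hxn hxbn
  -- monotonicity consequences
  have mono0 : μ 0 * ‖x 0 - xb 0‖ ^ 2
      ≤ ⟪x 0 - xb 0, (z 0 - zb 0) - (x 0 - xb 0)⟫ := by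
    have h := (hA 0 (by omega)).1 hx0 hxb0
    have e : (z 0 - x 0) - (zb 0 - xb 0) = (z 0 - zb 0) - (x 0 - xb 0) := by abel
    rwa [e] at h
  have monoi : ∀ i ∈ Finset.range k, μ (i+1) * ‖x (i+1) - xb (i+1)‖ ^ 2
      ≤ ⟪x (i+1) - xb (i+1),
          ((z (i+1) - zb (i+1)) + (x i - xb i) - (z i - zb i)) - (x (i+1) - xb (i+1))⟫ := by
    intro i hi
    have hik := Finset.mem_range.1 hi
    have h := (hA (i+1) (by omega)).1 (hxi (i+1) (by omega) (by omega))
      (hxbi (i+1) (by omega) (by omega))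
    simp only [Nat.add_sub_cancel] at h
    have e : (z (i+1) + x i - z i - x (i+1)) - (zb (i+1) + xb i - zb i - xb (i+1))
        = ((z (i+1) - zb (i+1)) + (x i - xb i) - (z i - zb i)) - (x (i+1) - xb (i+1)) := by
      abel
    rwa [e] at h
  have monon : μ (k+1) * ‖x (k+1) - xb (k+1)‖ ^ 2
      ≤ ⟪x (k+1) - xb (k+1),
          ((x 0 - xb 0) + (x k - xb k) - (z k - zb k)) - (x (k+1) - xb (k+1))⟫ := by
    have h := (hA (k+1) (by omega)).1 hxn hxbn
    have e : (x 0 + x k - z k - x (k+1)) - (xb 0 + xb k - zb k - xb (k+1))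
        = ((x 0 - xb 0) + (x k - xb k) - (z k - zb k)) - (x (k+1) - xb (k+1)) := by abel
    rwa [e] at h
  -- key identity
  have hid := mt_key_identity (fun i => x i - xb i) (fun i => z i - zb i) k
  -- bound the μ-sum
  have hMS : (∑ i ∈ Finset.range (k+2), μ i * ‖x i - xb i‖ ^ 2)
      ≤ ⟪x 0 - xb 0, (z 0 - zb 0) - (x 0 - xb 0)⟫
        + ∑ i ∈ Finset.range k, ⟪x (i+1) - xb (i+1),
            ((z (i+1) - zb (i+1)) + (x i - xb i) - (z i - zb i)) - (x (i+1) - xb (i+1))⟫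
        + ⟪x (k+1) - xb (k+1),
            ((x 0 - xb 0) + (x k - xb k) - (z k - zb k)) - (x (k+1) - xb (k+1))⟫ := by
    have eM : (∑ i ∈ Finset.range (k+2), μ i * ‖x i - xb i‖ ^ 2)
        = μ 0 * ‖x 0 - xb 0‖ ^ 2 + (∑ i ∈ Finset.range k, μ (i+1) * ‖x (i+1) - xb (i+1)‖ ^ 2)
          + μ (k+1) * ‖x (k+1) - xb (k+1)‖ ^ 2 := by
      rw [Finset.sum_range_succ, Finset.sum_range_succ']; ring
    rw [eM]
    exact add_le_add (add_le_add mono0 (Finset.sum_le_sum monoi)) monon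
  -- expand the first sum of the goal
  have e1 : (∑ i ∈ Finset.range (k+1),
      ‖(z i + γ • (x (i + 1) - x i)) - (zb i + γ • (xb (i + 1) - xb i))‖ ^ 2)
      = (∑ i ∈ Finset.range (k+1), ‖z i - zb i‖ ^ 2)
        + 2 * γ * ∑ i ∈ Finset.range (k+1),
            ⟪z i - zb i, (x (i+1) - xb (i+1)) - (x i - xb i)⟫
        + γ ^ 2 * ∑ i ∈ Finset.range (k+1),
            ‖(x (i+1) - xb (i+1)) - (x i - xb i)‖ ^ 2 := by
    have expand : ∀ i, ‖(z i + γ • (x (i + 1) - x i)) - (zb i + γ • (xb (i + 1) - xb i))‖ ^ 2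
        = ‖z i - zb i‖ ^ 2
          + 2 * γ * ⟪z i - zb i, (x (i+1) - xb (i+1)) - (x i - xb i)⟫
          + γ ^ 2 * ‖(x (i+1) - xb (i+1)) - (x i - xb i)‖ ^ 2 := by
      intro i
      have hv : (z i + γ • (x (i + 1) - x i)) - (zb i + γ • (xb (i + 1) - xb i))
          = (z i - zb i) + γ • ((x (i+1) - xb (i+1)) - (x i - xb i)) := by
        simp only [smul_sub]; abel
      rw [hv, norm_add_sq_real, real_inner_smul_right, norm_smul]
      simp only [mul_pow, Real.norm_eq_abs, sq_abs]
      ring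
    rw [Finset.sum_congr rfl (fun i _ => expand i), Finset.sum_add_distrib,
      Finset.sum_add_distrib, ← Finset.mul_sum, ← Finset.mul_sum]
  have e2 : (∑ i ∈ Finset.range (k+1), ‖(x i - x (i + 1)) - (xb i - xb (i + 1))‖ ^ 2)
      = ∑ i ∈ Finset.range (k+1), ‖(x (i+1) - xb (i+1)) - (x i - xb i)‖ ^ 2 := by
    refine Finset.sum_congr rfl fun i _ => ?_
    rw [show (x i - x (i + 1)) - (xb i - xb (i + 1))
      = -((x (i+1) - xb (i+1)) - (x i - xb i)) by abel, norm_neg]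
  have e3 : ‖(x (k + 1) - x 0) - (xb (k + 1) - xb 0)‖ ^ 2
      = ‖(x (k+1) - xb (k+1)) - (x 0 - xb 0)‖ ^ 2 := by
    rw [show (x (k + 1) - x 0) - (xb (k + 1) - xb 0)
      = (x (k+1) - xb (k+1)) - (x 0 - xb 0) by abel]
  rw [e1, e2, e3]
  have h1 : 2 * (∑ i ∈ Finset.range (k+1),
        ⟪z i - zb i, (x (i+1) - xb (i+1)) - (x i - xb i)⟫)
      + (∑ i ∈ Finset.range (k+1), ‖(x (i+1) - xb (i+1)) - (x i - xb i)‖ ^ 2)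
      + ‖(x (k+1) - xb (k+1)) - (x 0 - xb 0)‖ ^ 2
      + 2 * (∑ i ∈ Finset.range (k+2), μ i * ‖x i - xb i‖ ^ 2) ≤ 0 := by
    linarith
  nlinarith [mul_nonpos_of_nonneg_of_nonpos hγ0.le h1]
end

section
/- Let $n\geq 2$. Suppose $A_1,\dots,A_{n-1}:\mathcal{H}\to\mathcal{H}$ are maximally monotone and $L$-Lipschitz, and $A_n:\mathcal{H}\rightrightarrows\mathcal{H}$ is maximally monotone. Then there exists $\eta\in(0,1)$ such that for all $\mathbf{z},\bar{\mathbf{z}}\in\mathcal{H}^{n-1}$, $\sum_{i=1}^{n-1}\|x_i-\bar x_i\|^2\geq \eta\|\mathbf{z}-\bar{\mathbf{z}}\|^2$, where $x_i,\bar x_i$ are defined by the Malitsky–Tam resolvent recursion from $\mathbf{z}$ and $\bar{\mathbf{z}}$ respectively. -/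
open scoped RealInnerProductSpace

/-- **Lemma 3.3**: if `A 0, …, A (n-2)` are single-valued, maximally monotone and
`L`-Lipschitz and `A (n-1)` is maximally monotone, then there is `η ∈ (0,1)` such
that for all `z, z̄` (with `x, x̄` given by the Malitsky–Tam resolvent recursion,
encoded by graph memberships) one has `∑_{i<n-1} ‖xᵢ - x̄ᵢ‖² ≥ η ‖z - z̄‖²`. -/
theorem malitskyTam_lipschitz_lower_bound
    {H : Type*} [NormedAddCommGroup H] [InnerProductSpace ℝ H]
    (n : ℕ) (hn : 2 ≤ n) (L : ℝ) (hL : 0 ≤ L)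
    (a : ℕ → H → H)                      -- the single-valued operators `A 0, …, A (n-2)`
    (An : H → Set H)                     -- the operator `A (n-1)`
    (ha : ∀ i, i ≤ n - 2 → IsMaxMonotoneOp (fun x => {a i x}) 0)
    (halip : ∀ i, i ≤ n - 2 → ∀ x y : H, ‖a i x - a i y‖ ≤ L * ‖x - y‖)
    (hAn : IsMaxMonotoneOp An 0) :
    ∃ η : ℝ, 0 < η ∧ η < 1 ∧
      ∀ z zb x xb : ℕ → H,
        z 0 - x 0 = a 0 (x 0) →
        (∀ i, 1 ≤ i → i ≤ n - 2 → (z i + x (i - 1) - z (i - 1)) - x i = a i (x i)) →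
        (x 0 + x (n - 2) - z (n - 2)) - x (n - 1) ∈ An (x (n - 1)) →
        zb 0 - xb 0 = a 0 (xb 0) →
        (∀ i, 1 ≤ i → i ≤ n - 2 → (zb i + xb (i - 1) - zb (i - 1)) - xb i = a i (xb i)) →
        (xb 0 + xb (n - 2) - zb (n - 2)) - xb (n - 1) ∈ An (xb (n - 1)) →
        η * ∑ i ∈ Finset.range (n - 1), ‖z i - zb i‖ ^ 2 ≤
          ∑ i ∈ Finset.range (n - 1), ‖x i - xb i‖ ^ 2 := by
  have hnpos : (0:ℝ) < n := by positivity
  have hnR : (2:ℝ) ≤ (n:ℝ) := by exact_mod_cast hn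
  set C : ℝ := (n:ℝ)^3 * (2+L)^2 with hC
  have hCpos : 0 < C := by positivity
  refine ⟨1/(1+C), by positivity, ?_, ?_⟩
  · rw [div_lt_one (by linarith)]; linarith
  intro z zb x xb h0 hi hxn hb0 hbi hbn
  set S := ∑ i ∈ Finset.range (n-1), ‖x i - xb i‖^2 with hSdef
  have hS0 : 0 ≤ S := Finset.sum_nonneg (fun i _ => by positivity)
  have hsq : Real.sqrt S ^ 2 = S := Real.sq_sqrt hS0
  have hsqrt0 : 0 ≤ Real.sqrt S := Real.sqrt_nonneg S
  have hE : ∀ j, j ≤ n - 2 → ‖x j - xb j‖ ≤ Real.sqrt S := by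
    intro j hj
    have hmem : j ∈ Finset.range (n-1) := Finset.mem_range.mpr (by omega)
    have h1 : ‖x j - xb j‖^2 ≤ S :=
      Finset.single_le_sum (f := fun i => ‖x i - xb i‖^2) (fun i _ => by positivity) hmem
    calc ‖x j - xb j‖ = Real.sqrt (‖x j - xb j‖^2) := (Real.sqrt_sq (norm_nonneg _)).symm
      _ ≤ Real.sqrt S := Real.sqrt_le_sqrt h1
  have hD : ∀ i, i ≤ n - 2 → ‖z i - zb i‖ ≤ ((i:ℝ)+1) * (2+L) * Real.sqrt S := by
    intro i
    induction i with
    | zero =>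
      intro _
      have hz : z 0 - zb 0 = (x 0 - xb 0) + ((z 0 - x 0) - (zb 0 - xb 0)) := by abel
      rw [hz, h0, hb0]
      have hE0 := hE 0 (by omega)
      have hlip := halip 0 (by omega) (x 0) (xb 0)
      calc ‖(x 0 - xb 0) + (a 0 (x 0) - a 0 (xb 0))‖
          ≤ ‖x 0 - xb 0‖ + ‖a 0 (x 0) - a 0 (xb 0)‖ := norm_add_le _ _
        _ ≤ Real.sqrt S + L * ‖x 0 - xb 0‖ := by
            have : L * ‖x 0 - xb 0‖ ≤ L * ‖x 0 - xb 0‖ := le_refl _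
            linarith
        _ ≤ Real.sqrt S + L * Real.sqrt S := by
            have := mul_le_mul_of_nonneg_left hE0 hL; linarith
        _ ≤ (((0:ℕ):ℝ) + 1) * (2+L) * Real.sqrt S := by push_cast; nlinarith
    | succ i ih =>
      intro hin
      have ih' := ih (by omega)
      have heq := hi (i+1) (by omega) hin
      have hbeq := hbi (i+1) (by omega) hin
      simp only [Nat.add_sub_cancel] at heq hbeq
      have hz : z (i+1) - zb (i+1) =
          ((z (i+1) + x i - z i) - x (i+1) - ((zb (i+1) + xb i - zb i) - xb (i+1)))
          + (x (i+1) - xb (i+1)) + (z i - zb i) - (x i - xb i) := by abel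
      rw [hz, heq, hbeq]
      have hlip := halip (i+1) hin (x (i+1)) (xb (i+1))
      have hE1 := hE (i+1) hin
      have hE2 := hE i (by omega)
      have hL1 : ‖a (i+1) (x (i+1)) - a (i+1) (xb (i+1))‖ ≤ L * Real.sqrt S := by
        calc ‖a (i+1) (x (i+1)) - a (i+1) (xb (i+1))‖ ≤ L * ‖x (i+1) - xb (i+1)‖ := hlip
          _ ≤ L * Real.sqrt S := mul_le_mul_of_nonneg_left hE1 hL
      have tri : ‖(a (i+1) (x (i+1)) - a (i+1) (xb (i+1)))
          + (x (i+1) - xb (i+1)) + (z i - zb i) - (x i - xb i)‖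
          ≤ ‖a (i+1) (x (i+1)) - a (i+1) (xb (i+1))‖ + ‖x (i+1) - xb (i+1)‖
            + ‖z i - zb i‖ + ‖x i - xb i‖ := by
        calc ‖(a (i+1) (x (i+1)) - a (i+1) (xb (i+1))) + (x (i+1) - xb (i+1)) + (z i - zb i) - (x i - xb i)‖
            ≤ ‖(a (i+1) (x (i+1)) - a (i+1) (xb (i+1))) + (x (i+1) - xb (i+1)) + (z i - zb i)‖ + ‖x i - xb i‖ :=
              norm_sub_le _ _
          _ ≤ ‖(a (i+1) (x (i+1)) - a (i+1) (xb (i+1))) + (x (i+1) - xb (i+1))‖ + ‖z i - zb i‖ + ‖x i - xb i‖ := by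
              have := norm_add_le ((a (i+1) (x (i+1)) - a (i+1) (xb (i+1))) + (x (i+1) - xb (i+1))) (z i - zb i)
              linarith
          _ ≤ ‖a (i+1) (x (i+1)) - a (i+1) (xb (i+1))‖ + ‖x (i+1) - xb (i+1)‖ + ‖z i - zb i‖ + ‖x i - xb i‖ := by
              have := norm_add_le (a (i+1) (x (i+1)) - a (i+1) (xb (i+1))) (x (i+1) - xb (i+1))
              linarith
      push_cast
      nlinarith [tri, hL1, hE1, hE2, ih', hsqrt0]
  have hDsq : ∀ i ∈ Finset.range (n-1), ‖z i - zb i‖^2 ≤ (n:ℝ)^2 * (2+L)^2 * S := by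
    intro i hmem
    have hi' : i ≤ n - 2 := by have := Finset.mem_range.mp hmem; omega
    have h1 := hD i hi'
    have h2 : ((i:ℝ)+1) ≤ (n:ℝ) := by
      have : i + 1 ≤ n := by omega
      exact_mod_cast this
    have h3 : ((i:ℝ)+1) * (2+L) * Real.sqrt S ≤ (n:ℝ) * (2+L) * Real.sqrt S := by
      gcongr
    have h4 : ‖z i - zb i‖ ≤ (n:ℝ) * (2+L) * Real.sqrt S := le_trans h1 h3
    calc ‖z i - zb i‖^2 ≤ ((n:ℝ) * (2+L) * Real.sqrt S)^2 :=
          pow_le_pow_left₀ (norm_nonneg _) h4 2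
      _ = (n:ℝ)^2 * (2+L)^2 * S := by rw [mul_pow, mul_pow, hsq]
  have hsum : ∑ i ∈ Finset.range (n-1), ‖z i - zb i‖^2 ≤ C * S := by
    calc ∑ i ∈ Finset.range (n-1), ‖z i - zb i‖^2
        ≤ ∑ _i ∈ Finset.range (n-1), (n:ℝ)^2 * (2+L)^2 * S := Finset.sum_le_sum hDsq
      _ = ((n-1:ℕ):ℝ) * ((n:ℝ)^2 * (2+L)^2 * S) := by
          rw [Finset.sum_const, Finset.card_range]; push_cast; ring
      _ ≤ (n:ℝ) * ((n:ℝ)^2 * (2+L)^2 * S) := by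
          have h5 : ((n-1:ℕ):ℝ) ≤ (n:ℝ) := by exact_mod_cast Nat.sub_le n 1
          have hXnn : 0 ≤ (n:ℝ)^2 * (2+L)^2 * S := mul_nonneg (by positivity) hS0
          exact mul_le_mul_of_nonneg_right h5 (by nlinarith)
      _ = C * S := by rw [hC]; ring
  calc (1/(1+C)) * ∑ i ∈ Finset.range (n-1), ‖z i - zb i‖^2
      ≤ (1/(1+C)) * (C * S) := by
        have h1C : (0:ℝ) < 1/(1+C) := by positivity
        exact mul_le_mul_of_nonneg_left hsum (le_of_lt h1C)
    _ ≤ S := by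
        rw [div_mul_eq_mul_div, div_le_iff₀ (by linarith)]
        nlinarith
end

section
/- Let $n\geq 2$ and $\gamma\in(0,1)$. If $A_1,\dots,A_{n-1}:\mathcal{H}\to\mathcal{H}$ are maximally monotone and $L$-Lipschitz, and $A_n:\mathcal{H}\rightrightarrows\mathcal{H}$ is maximally $\mu$-strongly monotone ($\mu>0$), then the Malitsky–Tam operator $T_{\rm MT}:\mathcal{H}^{n-1}\to\mathcal{H}^{n-1}$ is a $\beta$-contraction for some $\beta\in(0,1)$. -/
open scoped RealInnerProductSpace

/-- Auxiliary recursion: `mtAux J z 0 = J 0 (z 0)` and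
`mtAux J z (i+1) = J (i+1) (z (i+1) + mtAux J z i - z i)`. -/
def mtAux {H : Type*} [NormedAddCommGroup H] [InnerProductSpace ℝ H]
    (J : ℕ → H → H) (z : ℕ → H) : ℕ → H
  | 0 => J 0 (z 0)
  | i + 1 => J (i + 1) (z (i + 1) + mtAux J z i - z i)

/-- The shadow point `x i` of the Malitsky–Tam recursion with `n` operators. -/
def mtX {H : Type*} [NormedAddCommGroup H] [InnerProductSpace ℝ H]
    (J : ℕ → H → H) (n : ℕ) (z : ℕ → H) (i : ℕ) : H :=
  if i = n - 1 then J (n - 1) (mtAux J z 0 + mtAux J z (n - 2) - z (n - 2))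
  else mtAux J z i

/-- The Malitsky–Tam fixed-point operator `T_MT`, componentwise:
`(T_MT z) i = z i + γ (x (i+1) - x i)` for `i = 0, …, n-2`. -/
def mtT {H : Type*} [NormedAddCommGroup H] [InnerProductSpace ℝ H]
    (J : ℕ → H → H) (n : ℕ) (γ : ℝ) (z : ℕ → H) (i : ℕ) : H :=
  z i + γ • (mtX J n z (i + 1) - mtX J n z i)



section

variable {H : Type*} [NormedAddCommGroup H] [InnerProductSpace ℝ H]

private def mtC (d e : ℕ → H) : ℕ → H
  | 0 => e 0
  | i + 1 => e (i + 1) + d i - e i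

private lemma mt_aux_ident (d e : ℕ → H) (m : ℕ) :
    ∑ i ∈ Finset.range (m + 1), ⟪d i, mtC d e i - d i⟫ =
      (∑ i ∈ Finset.range m, (⟪e i, d i - d (i + 1)⟫ - (1/2) * ‖d (i + 1) - d i‖ ^ 2))
        + ⟪d m, e m⟫ - (1/2) * ‖d m‖ ^ 2 - (1/2) * ‖d 0‖ ^ 2 := by
  induction m with
  | zero =>
      rw [Finset.sum_range_one]
      simp only [Finset.range_zero, Finset.sum_empty, mtC, inner_sub_right,
        real_inner_self_eq_norm_sq]
      ring
  | succ m ih =>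
      rw [Finset.sum_range_succ, ih, Finset.sum_range_succ]
      have h1 : ⟪d (m+1), mtC d e (m+1) - d (m+1)⟫
          = ⟪d (m+1), e (m+1)⟫ + ⟪d (m+1), d m⟫ - ⟪d (m+1), e m⟫ - ‖d (m+1)‖ ^ 2 := by
        simp only [mtC, inner_sub_right, inner_add_right, real_inner_self_eq_norm_sq]
        try ring
      have h2 : ⟪e m, d m - d (m+1)⟫ = ⟪e m, d m⟫ - ⟪e m, d (m+1)⟫ := inner_sub_right _ _ _
      have h3 : ‖d (m+1) - d m‖ ^ 2 = ‖d (m+1)‖^2 - 2*⟪d (m+1), d m⟫ + ‖d m‖^2 :=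
        norm_sub_sq_real _ _
      have h4 := real_inner_comm (e m) (d (m+1))
      have h5 := real_inner_comm (e m) (d m)
      rw [h1, h2, h3]
      linarith

private lemma mt_cyclic_ident (d e : ℕ → H) {n : ℕ} (hn : 2 ≤ n) :
    (∑ i ∈ Finset.range (n-1), ⟪d i, mtC d e i - d i⟫)
      + ⟪d (n-1), d 0 + d (n-2) - e (n-2) - d (n-1)⟫
    = (∑ i ∈ Finset.range (n-1), (⟪e i, d i - d (i+1)⟫ - (1/2) * ‖d (i+1) - d i‖ ^ 2))
      - (1/2) * ‖d (n-1) - d 0‖ ^ 2 := by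
  obtain ⟨m, rfl⟩ : ∃ m, n = m + 2 := ⟨n - 2, by omega⟩
  simp only [show m + 2 - 1 = m + 1 from rfl, show m + 2 - 2 = m from rfl]
  rw [mt_aux_ident d e m, Finset.sum_range_succ]
  have hA : ⟪d (m+1), d 0 + d m - e m - d (m+1)⟫
      = ⟪d (m+1), d 0⟫ + ⟪d (m+1), d m⟫ - ⟪d (m+1), e m⟫ - ‖d (m+1)‖^2 := by
    simp only [inner_sub_right, inner_add_right, real_inner_self_eq_norm_sq]
    try ring
  have hB : ⟪e m, d m - d (m+1)⟫ = ⟪e m, d m⟫ - ⟪e m, d (m+1)⟫ := inner_sub_right _ _ _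
  have hC : ‖d (m+1) - d m‖^2 = ‖d (m+1)‖^2 - 2*⟪d (m+1), d m⟫ + ‖d m‖^2 := norm_sub_sq_real _ _
  have hD : ‖d (m+1) - d 0‖^2 = ‖d (m+1)‖^2 - 2*⟪d (m+1), d 0⟫ + ‖d 0‖^2 := norm_sub_sq_real _ _
  have h4 := real_inner_comm (e m) (d (m+1))
  have h5 := real_inner_comm (e m) (d m)
  rw [hA, hB, hC, hD]
  linarith

set_option maxHeartbeats 1000000 in
private lemma mt_core {n : ℕ} (hn : 2 ≤ n) {γ L μ C δ : ℝ}
    (hγ0 : 0 < γ) (hγ1 : γ < 1) (hL : 0 ≤ L) (hμ : 0 < μ)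
    (hCdef : C = 2*(n:ℝ)^4*(1+L)^2)
    (hδ0 : 0 ≤ δ) (hδ1 : δ ≤ γ*(1-γ)) (hδ2 : δ ≤ 2*γ*μ)
    (d e : ℕ → H)
    (mono0 : (0:ℝ) ≤ ⟪d 0, e 0 - d 0⟫)
    (monoi : ∀ k, k + 1 ≤ n - 2 → (0:ℝ) ≤ ⟪d (k+1), e (k+1) + d k - e k - d (k+1)⟫)
    (monon : μ * ‖d (n-1)‖^2 ≤ ⟪d (n-1), d 0 + d (n-2) - e (n-2) - d (n-1)⟫)
    (lip0 : ‖e 0‖ ≤ (1+L) * ‖d 0‖)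
    (lipi : ∀ k, k + 1 ≤ n - 2 → ‖e (k+1)‖ ≤ ‖e k‖ + ‖d (k+1) - d k‖ + L * ‖d (k+1)‖) :
    ∑ i ∈ Finset.range (n-1), ‖e i + γ • (d (i+1) - d i)‖^2
      ≤ (1 - δ/C) * ∑ i ∈ Finset.range (n-1), ‖e i‖^2 := by
  have hn0 : (0:ℝ) < (n:ℝ) := by exact_mod_cast (by omega : 0 < n)
  have hN2 : (2:ℝ) ≤ (n:ℝ) := by exact_mod_cast hn
  have hC0 : (0:ℝ) < C := by
    rw [hCdef]
    exact mul_pos (mul_pos two_pos (pow_pos hn0 4)) (pow_pos (by linarith) 2)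
  -- abbreviations (plain terms, no `set`)
  have hQΔ0 : (0:ℝ) ≤ ∑ i ∈ Finset.range (n-1), ‖d (i+1) - d i‖^2 :=
    Finset.sum_nonneg fun _ _ => sq_nonneg _
  have hDn0 : (0:ℝ) ≤ ‖d (n-1)‖^2 := sq_nonneg _
  set T : ℝ := ∑ j ∈ Finset.range (n-1), ‖d (j+1) - d j‖ with hT
  set S : ℝ := ‖d (n-1)‖ + T with hSdef
  have hT0 : 0 ≤ T := by rw [hT]; exact Finset.sum_nonneg fun _ _ => norm_nonneg _
  have hS0 : 0 ≤ S := by rw [hSdef]; exact add_nonneg (norm_nonneg _) hT0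
  -- Step B : bound on the z-differences by the x-differences
  have hdIco : ∀ k i, i + k = n - 1 →
      ‖d i‖ ≤ ‖d (n-1)‖ + ∑ j ∈ Finset.Ico i (n-1), ‖d (j+1) - d j‖ := by
    intro k
    induction k with
    | zero =>
        intro i hi
        have hin : i = n - 1 := by omega
        subst hin
        simp
    | succ k ih =>
        intro i hi
        have h1 := ih (i+1) (by omega)
        have h2 : ‖d i‖ ≤ ‖d (i+1)‖ + ‖d (i+1) - d i‖ := by
          have h := norm_sub_le (d (i+1)) (d (i+1) - d i)
          rwa [sub_sub_cancel] at h
        have h3 : ∑ j ∈ Finset.Ico i (n-1), ‖d (j+1) - d j‖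
            = ‖d (i+1) - d i‖ + ∑ j ∈ Finset.Ico (i+1) (n-1), ‖d (j+1) - d j‖ :=
          Finset.sum_eq_sum_Ico_succ_bot (by omega) _
        have h4 : ‖d (i+1)‖ ≤ ‖d (n-1)‖ + ∑ j ∈ Finset.Ico (i+1) (n-1), ‖d (j+1) - d j‖ := h1
        linarith
  have hdS : ∀ i, i ≤ n - 1 → ‖d i‖ ≤ S := by
    intro i hi
    refine (hdIco (n-1-i) i (by omega)).trans ?_
    have h : ∑ j ∈ Finset.Ico i (n-1), ‖d (j+1) - d j‖ ≤ T := by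
      rw [hT, Finset.range_eq_Ico]
      exact Finset.sum_le_sum_of_subset_of_nonneg
        (Finset.Ico_subset_Ico (Nat.zero_le _) le_rfl) (fun _ _ _ => norm_nonneg _)
    rw [hSdef]; linarith
  have heS : ∀ i, i ≤ n - 2 → ‖e i‖ ≤ ((i:ℝ)+1) * ((1+L) * S) := by
    intro i
    induction i with
    | zero =>
        intro _
        have h0 := hdS 0 (by omega)
        have h1 : (1+L) * ‖d 0‖ ≤ (1+L) * S := mul_le_mul_of_nonneg_left h0 (by linarith)
        simpa using lip0.trans h1
    | succ k ih =>
        intro hk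
        push_cast
        have h1 := lipi k hk
        have h2 := ih (by omega)
        have h3 : L * ‖d (k+1)‖ ≤ L * S := mul_le_mul_of_nonneg_left (hdS (k+1) (by omega)) hL
        have h4 : ‖d (k+1) - d k‖ ≤ S := by
          have h5 : ‖d (k+1) - d k‖ ≤ T := by
            rw [hT]
            exact Finset.single_le_sum (f := fun j => ‖d (j+1) - d j‖)
              (fun j _ => norm_nonneg _) (Finset.mem_range.2 (by omega))
          have h6 := norm_nonneg (d (n-1))
          rw [hSdef]; linarith
        calc ‖e (k+1)‖ ≤ ‖e k‖ + ‖d (k+1) - d k‖ + L * ‖d (k+1)‖ := h1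
          _ ≤ ((k:ℝ)+1) * ((1+L)*S) + S + L * S := by linarith
          _ = ((k:ℝ)+1+1) * ((1+L)*S) := by ring
  have hsumE : ∑ i ∈ Finset.range (n-1), ‖e i‖^2
      ≤ ((n:ℝ)-1) * ((n:ℝ) * ((1+L) * S))^2 := by
    have hb : ∀ i ∈ Finset.range (n-1), ‖e i‖^2 ≤ ((n:ℝ) * ((1+L)*S))^2 := by
      intro i hi
      have hi' : i ≤ n - 2 := by have := Finset.mem_range.1 hi; omega
      have h1 := heS i hi'
      have h2 : ((i:ℝ)+1) * ((1+L)*S) ≤ (n:ℝ) * ((1+L)*S) := by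
        have hin : (i:ℝ)+1 ≤ (n:ℝ) := by exact_mod_cast (by omega : i + 1 ≤ n)
        exact mul_le_mul_of_nonneg_right hin (mul_nonneg (by linarith) hS0)
      exact pow_le_pow_left₀ (norm_nonneg _) (h1.trans h2) 2
    calc ∑ i ∈ Finset.range (n-1), ‖e i‖^2
        ≤ ∑ _i ∈ Finset.range (n-1), ((n:ℝ)*((1+L)*S))^2 := Finset.sum_le_sum hb
      _ = ((n-1:ℕ):ℝ) * ((n:ℝ)*((1+L)*S))^2 := by
          rw [Finset.sum_const, Finset.card_range, nsmul_eq_mul]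
      _ = ((n:ℝ)-1) * ((n:ℝ)*((1+L)*S))^2 := by
          rw [Nat.cast_sub (by omega), Nat.cast_one]
  have hT2 : T^2 ≤ ((n:ℝ)-1) * ∑ i ∈ Finset.range (n-1), ‖d (i+1) - d i‖^2 := by
    have h := sq_sum_le_card_mul_sum_sq (s := Finset.range (n-1))
      (f := fun j => ‖d (j+1) - d j‖)
    rw [Finset.card_range] at h
    rw [hT]
    calc (∑ j ∈ Finset.range (n-1), ‖d (j+1) - d j‖)^2
        ≤ ((n-1:ℕ):ℝ) * ∑ i ∈ Finset.range (n-1), ‖d (i+1) - d i‖^2 := h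
      _ = ((n:ℝ)-1) * ∑ i ∈ Finset.range (n-1), ‖d (i+1) - d i‖^2 := by
          rw [Nat.cast_sub (by omega), Nat.cast_one]
  have hS2 : S^2 ≤ 2*((n:ℝ)-1) *
      ((∑ i ∈ Finset.range (n-1), ‖d (i+1) - d i‖^2) + ‖d (n-1)‖^2) := by
    rw [hSdef]
    nlinarith [sq_nonneg (‖d (n-1)‖ - T), hT2, hDn0, hQΔ0,
      mul_nonneg (by linarith : (0:ℝ) ≤ (n:ℝ)-2) hDn0]
  have hQ0 : (0:ℝ) ≤ (∑ i ∈ Finset.range (n-1), ‖d (i+1) - d i‖^2) + ‖d (n-1)‖^2 :=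
    add_nonneg hQΔ0 hDn0
  have hP : ∑ i ∈ Finset.range (n-1), ‖e i‖^2
      ≤ C * ((∑ i ∈ Finset.range (n-1), ‖d (i+1) - d i‖^2) + ‖d (n-1)‖^2) := by
    have hK0 : (0:ℝ) ≤ ((n:ℝ)-1)*(n:ℝ)^2*(1+L)^2 :=
      mul_nonneg (mul_nonneg (by linarith) (sq_nonneg _)) (sq_nonneg _)
    have h6 : ((n:ℝ)-1)^2 ≤ (n:ℝ)^2 := by nlinarith
    have h7 : (0:ℝ) ≤ 2*(n:ℝ)^2*(1+L)^2 *
        ((∑ i ∈ Finset.range (n-1), ‖d (i+1) - d i‖^2) + ‖d (n-1)‖^2) :=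
      mul_nonneg (mul_nonneg (mul_nonneg (by norm_num) (sq_nonneg _)) (sq_nonneg _)) hQ0
    calc ∑ i ∈ Finset.range (n-1), ‖e i‖^2
        ≤ ((n:ℝ)-1) * ((n:ℝ)*((1+L)*S))^2 := hsumE
      _ = ((n:ℝ)-1)*(n:ℝ)^2*(1+L)^2 * S^2 := by ring
      _ ≤ ((n:ℝ)-1)*(n:ℝ)^2*(1+L)^2 * (2*((n:ℝ)-1) *
            ((∑ i ∈ Finset.range (n-1), ‖d (i+1) - d i‖^2) + ‖d (n-1)‖^2)) :=
          mul_le_mul_of_nonneg_left hS2 hK0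
      _ = (2*(n:ℝ)^2*(1+L)^2 *
            ((∑ i ∈ Finset.range (n-1), ‖d (i+1) - d i‖^2) + ‖d (n-1)‖^2)) * ((n:ℝ)-1)^2 := by
          ring
      _ ≤ (2*(n:ℝ)^2*(1+L)^2 *
            ((∑ i ∈ Finset.range (n-1), ‖d (i+1) - d i‖^2) + ‖d (n-1)‖^2)) * (n:ℝ)^2 :=
          mul_le_mul_of_nonneg_left h6 h7
      _ = C * ((∑ i ∈ Finset.range (n-1), ‖d (i+1) - d i‖^2) + ‖d (n-1)‖^2) := by
          rw [hCdef]; ring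
  -- Step A : the key inner-product inequality
  have keyA : ∑ i ∈ Finset.range (n-1), ⟪e i, d (i+1) - d i⟫
      ≤ -(1/2) * (∑ i ∈ Finset.range (n-1), ‖d (i+1) - d i‖^2)
        - (1/2) * ‖d (n-1) - d 0‖^2 - μ * ‖d (n-1)‖^2 := by
    have hid := mt_cyclic_ident d e hn
    have hmono_sum : (0:ℝ) ≤ ∑ i ∈ Finset.range (n-1), ⟪d i, mtC d e i - d i⟫ := by
      refine Finset.sum_nonneg fun i hi => ?_
      rcases i with _ | k
      · exact mono0
      · exact monoi k (by have := Finset.mem_range.1 hi; omega)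
    have hsum_split : ∑ i ∈ Finset.range (n-1),
          (⟪e i, d i - d (i+1)⟫ - (1/2) * ‖d (i+1) - d i‖^2)
        = (∑ i ∈ Finset.range (n-1), ⟪e i, d i - d (i+1)⟫)
          - (1/2) * ∑ i ∈ Finset.range (n-1), ‖d (i+1) - d i‖^2 := by
      rw [Finset.sum_sub_distrib, Finset.mul_sum]
    have hflipsum : ∑ i ∈ Finset.range (n-1), ⟪e i, d i - d (i+1)⟫
        = - ∑ i ∈ Finset.range (n-1), ⟪e i, d (i+1) - d i⟫ := by
      rw [← Finset.sum_neg_distrib]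
      exact Finset.sum_congr rfl fun i _ => by rw [← inner_neg_right, neg_sub]
    rw [hsum_split, hflipsum] at hid
    linarith [hmono_sum, monon, hid]
  -- final assembly
  have hexp : ∀ i, ‖e i + γ • (d (i+1) - d i)‖^2
      = ‖e i‖^2 + 2*γ*⟪e i, d (i+1) - d i⟫ + γ^2*‖d (i+1) - d i‖^2 := by
    intro i
    have h1 : ‖γ • (d (i+1) - d i)‖^2 = γ^2 * ‖d (i+1) - d i‖^2 := by
      rw [norm_smul, Real.norm_eq_abs, mul_pow, sq_abs]
    rw [norm_add_sq_real, real_inner_smul_right, h1]; ring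
  have hsum_exp : ∑ i ∈ Finset.range (n-1), ‖e i + γ • (d (i+1) - d i)‖^2
      = (∑ i ∈ Finset.range (n-1), ‖e i‖^2)
        + 2*γ*(∑ i ∈ Finset.range (n-1), ⟪e i, d (i+1) - d i⟫)
        + γ^2*(∑ i ∈ Finset.range (n-1), ‖d (i+1) - d i‖^2) := by
    rw [Finset.mul_sum, Finset.mul_sum, ← Finset.sum_add_distrib, ← Finset.sum_add_distrib]
    exact Finset.sum_congr rfl fun i _ => hexp i
  rw [hsum_exp]
  have k2 : 2*γ*(∑ i ∈ Finset.range (n-1), ⟪e i, d (i+1) - d i⟫)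
      ≤ 2*γ*(-(1/2) * (∑ i ∈ Finset.range (n-1), ‖d (i+1) - d i‖^2)
        - (1/2) * ‖d (n-1) - d 0‖^2 - μ * ‖d (n-1)‖^2) :=
    mul_le_mul_of_nonneg_left keyA (by linarith)
  have m1 : δ * (∑ i ∈ Finset.range (n-1), ‖d (i+1) - d i‖^2)
      ≤ (γ*(1-γ)) * (∑ i ∈ Finset.range (n-1), ‖d (i+1) - d i‖^2) :=
    mul_le_mul_of_nonneg_right hδ1 hQΔ0
  have m2 : δ * ‖d (n-1)‖^2 ≤ (2*γ*μ) * ‖d (n-1)‖^2 :=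
    mul_le_mul_of_nonneg_right hδ2 hDn0
  have m3 : (0:ℝ) ≤ γ * ‖d (n-1) - d 0‖^2 := mul_nonneg hγ0.le (sq_nonneg _)
  have m4 : (δ/C) * (∑ i ∈ Finset.range (n-1), ‖e i‖^2)
      ≤ δ * ((∑ i ∈ Finset.range (n-1), ‖d (i+1) - d i‖^2) + ‖d (n-1)‖^2) := by
    have h1 : (δ/C) * (∑ i ∈ Finset.range (n-1), ‖e i‖^2)
        ≤ (δ/C) * (C * ((∑ i ∈ Finset.range (n-1), ‖d (i+1) - d i‖^2) + ‖d (n-1)‖^2)) :=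
      mul_le_mul_of_nonneg_left hP (div_nonneg hδ0 hC0.le)
    have h2 : (δ/C) * (C * ((∑ i ∈ Finset.range (n-1), ‖d (i+1) - d i‖^2) + ‖d (n-1)‖^2))
        = δ * ((∑ i ∈ Finset.range (n-1), ‖d (i+1) - d i‖^2) + ‖d (n-1)‖^2) := by
      field_simp
    linarith
  linarith [k2, m1, m2, m3, m4]

end

/-- If `A 0, …, A (n-2)` are maximally monotone and `L`-Lipschitz and `A (n-1)` is
maximally `μ`-strongly monotone with `μ > 0`, then `T_MT` is a `β`-contraction for
some `β ∈ (0,1)` (in the product norm on `H^{n-1}`). -/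
theorem malitskyTam_contraction_case_a
    {H : Type*} [NormedAddCommGroup H] [InnerProductSpace ℝ H]
    (n : ℕ) (hn : 2 ≤ n) (γ : ℝ) (hγ : γ ∈ Set.Ioo (0 : ℝ) 1)
    (L μ : ℝ) (hL : 0 ≤ L) (hμ : 0 < μ)
    (a : ℕ → H → H) (An : H → Set H)
    (ha : ∀ i, i ≤ n - 2 → IsMaxMonotoneOp (fun x => {a i x}) 0)
    (halip : ∀ i, i ≤ n - 2 → ∀ x y : H, ‖a i x - a i y‖ ≤ L * ‖x - y‖)
    (hAn : IsMaxMonotoneOp An μ)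
    (J : ℕ → H → H)
    (hJ : ∀ i, i ≤ n - 2 → ∀ w : H, w - J i w = a i (J i w))
    (hJn : ∀ w : H, w - J (n - 1) w ∈ An (J (n - 1) w)) :
    ∃ β : ℝ, 0 < β ∧ β < 1 ∧
      ∀ z zb : ℕ → H,
        ∑ i ∈ Finset.range (n - 1), ‖mtT J n γ z i - mtT J n γ zb i‖ ^ 2 ≤
          β ^ 2 * ∑ i ∈ Finset.range (n - 1), ‖z i - zb i‖ ^ 2 := by
  obtain ⟨hγ0, hγ1⟩ := hγ
  have hn0 : (0:ℝ) < (n:ℝ) := by exact_mod_cast (by omega : 0 < n)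
  set C : ℝ := 2*(n:ℝ)^4*(1+L)^2 with hCdef
  have hC0 : (0:ℝ) < C :=
    mul_pos (mul_pos two_pos (pow_pos hn0 4)) (pow_pos (by linarith) 2)
  set δ : ℝ := min (min (γ*(1-γ)) (2*γ*μ)) (C/2) with hδdef
  have hδ0 : 0 < δ :=
    lt_min (lt_min (mul_pos hγ0 (by linarith)) (mul_pos (mul_pos two_pos hγ0) hμ))
      (half_pos hC0)
  have hδ1 : δ ≤ γ*(1-γ) := le_trans (min_le_left _ _) (min_le_left _ _)
  have hδ2 : δ ≤ 2*γ*μ := le_trans (min_le_left _ _) (min_le_right _ _)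
  have hδC : δ ≤ C/2 := min_le_right _ _
  have hcoef0 : 0 < 1 - δ/C := by
    have h1 : δ/C ≤ (C/2)/C := by gcongr
    have h2 : (C/2)/C = 1/2 := by field_simp
    rw [h2] at h1
    linarith
  have hcoef1 : 1 - δ/C < 1 := by
    have : 0 < δ/C := div_pos hδ0 hC0
    linarith
  refine ⟨Real.sqrt (1 - δ/C), Real.sqrt_pos.2 hcoef0, ?_, ?_⟩
  · have h := Real.sqrt_lt_sqrt hcoef0.le hcoef1
    simpa using h
  intro z zb
  rw [Real.sq_sqrt hcoef0.le]
  set x : ℕ → H := mtX J n z with hxdef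
  set xb : ℕ → H := mtX J n zb with hxbdef
  -- identification of the shadow sequence with the auxiliary recursion
  have hxlt : ∀ i, i < n - 1 → x i = mtAux J z i := by
    intro i hi
    rw [hxdef]
    unfold mtX
    rw [if_neg (Nat.ne_of_lt hi)]
  have hxblt : ∀ i, i < n - 1 → xb i = mtAux J zb i := by
    intro i hi
    rw [hxbdef]
    unfold mtX
    rw [if_neg (Nat.ne_of_lt hi)]
  -- resolvent identities
  have hx0 : z 0 - x 0 = a 0 (x 0) := by
    rw [hxlt 0 (by omega)]
    exact hJ 0 (by omega) (z 0)
  have hxb0 : zb 0 - xb 0 = a 0 (xb 0) := by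
    rw [hxblt 0 (by omega)]
    exact hJ 0 (by omega) (zb 0)
  have hxk : ∀ k, k + 1 ≤ n - 2 → z (k+1) + x k - z k - x (k+1) = a (k+1) (x (k+1)) := by
    intro k hk
    rw [hxlt (k+1) (by omega), hxlt k (by omega)]
    exact hJ (k+1) hk (z (k+1) + mtAux J z k - z k)
  have hxbk : ∀ k, k + 1 ≤ n - 2 → zb (k+1) + xb k - zb k - xb (k+1) = a (k+1) (xb (k+1)) := by
    intro k hk
    rw [hxblt (k+1) (by omega), hxblt k (by omega)]
    exact hJ (k+1) hk (zb (k+1) + mtAux J zb k - zb k)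
  have hxn : x 0 + x (n-2) - z (n-2) - x (n-1) ∈ An (x (n-1)) := by
    have hxe : x (n-1) = J (n-1) (mtAux J z 0 + mtAux J z (n-2) - z (n-2)) := by
      rw [hxdef]; unfold mtX; rw [if_pos rfl]
    rw [hxlt 0 (by omega), hxlt (n-2) (by omega), hxe]
    exact hJn (mtAux J z 0 + mtAux J z (n-2) - z (n-2))
  have hxbn : xb 0 + xb (n-2) - zb (n-2) - xb (n-1) ∈ An (xb (n-1)) := by
    have hxe : xb (n-1) = J (n-1) (mtAux J zb 0 + mtAux J zb (n-2) - zb (n-2)) := by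
      rw [hxbdef]; unfold mtX; rw [if_pos rfl]
    rw [hxblt 0 (by omega), hxblt (n-2) (by omega), hxe]
    exact hJn (mtAux J zb 0 + mtAux J zb (n-2) - zb (n-2))
  -- monotonicity inequalities
  have mono0 : (0:ℝ) ≤ ⟪x 0 - xb 0, (z 0 - zb 0) - (x 0 - xb 0)⟫ := by
    have h := (ha 0 (by omega)).1 (x := x 0) (y := xb 0)
      (u := a 0 (x 0)) (v := a 0 (xb 0)) rfl rfl
    rw [← hx0, ← hxb0] at h
    have hre : (z 0 - zb 0) - (x 0 - xb 0) = (z 0 - x 0) - (zb 0 - xb 0) := by abel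
    rw [hre]
    simpa using h
  have monoi : ∀ k, k + 1 ≤ n - 2 → (0:ℝ) ≤ ⟪x (k+1) - xb (k+1),
      (z (k+1) - zb (k+1)) + (x k - xb k) - (z k - zb k) - (x (k+1) - xb (k+1))⟫ := by
    intro k hk
    have h := (ha (k+1) hk).1 (x := x (k+1)) (y := xb (k+1))
      (u := a (k+1) (x (k+1))) (v := a (k+1) (xb (k+1))) rfl rfl
    rw [← hxk k hk, ← hxbk k hk] at h
    have hre : (z (k+1) - zb (k+1)) + (x k - xb k) - (z k - zb k) - (x (k+1) - xb (k+1))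
        = (z (k+1) + x k - z k - x (k+1)) - (zb (k+1) + xb k - zb k - xb (k+1)) := by abel
    rw [hre]
    simpa using h
  have monon : μ * ‖x (n-1) - xb (n-1)‖^2 ≤ ⟪x (n-1) - xb (n-1),
      (x 0 - xb 0) + (x (n-2) - xb (n-2)) - (z (n-2) - zb (n-2)) - (x (n-1) - xb (n-1))⟫ := by
    have h := hAn.1 hxn hxbn
    have hre : (x 0 - xb 0) + (x (n-2) - xb (n-2)) - (z (n-2) - zb (n-2)) - (x (n-1) - xb (n-1))
        = (x 0 + x (n-2) - z (n-2) - x (n-1)) - (xb 0 + xb (n-2) - zb (n-2) - xb (n-1)) := by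
      abel
    rw [hre]
    exact h
  -- Lipschitz relations
  have lip0 : ‖z 0 - zb 0‖ ≤ (1+L) * ‖x 0 - xb 0‖ := by
    have hre : z 0 - zb 0 = (a 0 (x 0) - a 0 (xb 0)) + (x 0 - xb 0) := by
      rw [← hx0, ← hxb0]; abel
    have h2 := halip 0 (by omega) (x 0) (xb 0)
    calc ‖z 0 - zb 0‖ = ‖(a 0 (x 0) - a 0 (xb 0)) + (x 0 - xb 0)‖ := by rw [hre]
      _ ≤ ‖a 0 (x 0) - a 0 (xb 0)‖ + ‖x 0 - xb 0‖ := norm_add_le _ _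
      _ ≤ L * ‖x 0 - xb 0‖ + ‖x 0 - xb 0‖ := by linarith
      _ = (1+L) * ‖x 0 - xb 0‖ := by ring
  have lipi : ∀ k, k + 1 ≤ n - 2 → ‖z (k+1) - zb (k+1)‖ ≤ ‖z k - zb k‖
      + ‖(x (k+1) - xb (k+1)) - (x k - xb k)‖ + L * ‖x (k+1) - xb (k+1)‖ := by
    intro k hk
    have hre : z (k+1) - zb (k+1) = (a (k+1) (x (k+1)) - a (k+1) (xb (k+1)))
        + ((x (k+1) - xb (k+1)) - (x k - xb k)) + (z k - zb k) := by
      rw [← hxk k hk, ← hxbk k hk]; abel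
    have h2 := halip (k+1) hk (x (k+1)) (xb (k+1))
    calc ‖z (k+1) - zb (k+1)‖
        = ‖(a (k+1) (x (k+1)) - a (k+1) (xb (k+1)))
            + ((x (k+1) - xb (k+1)) - (x k - xb k)) + (z k - zb k)‖ := by rw [hre]
      _ ≤ ‖a (k+1) (x (k+1)) - a (k+1) (xb (k+1))‖
            + ‖(x (k+1) - xb (k+1)) - (x k - xb k)‖ + ‖z k - zb k‖ := norm_add₃_le
      _ ≤ ‖z k - zb k‖ + ‖(x (k+1) - xb (k+1)) - (x k - xb k)‖
            + L * ‖x (k+1) - xb (k+1)‖ := by linarith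
  -- apply the core estimate
  have main := mt_core (H := H) hn hγ0 hγ1 hL hμ hCdef hδ0.le hδ1 hδ2
    (fun i => x i - xb i) (fun i => z i - zb i) mono0 monoi monon lip0 lipi
  beta_reduce at main
  have hTpt : ∀ i, mtT J n γ z i - mtT J n γ zb i
      = (z i - zb i) + γ • ((x (i+1) - xb (i+1)) - (x i - xb i)) := by
    intro i
    simp only [mtT]
    rw [← hxdef, ← hxbdef]
    simp only [smul_sub]
    abel
  calc ∑ i ∈ Finset.range (n-1), ‖mtT J n γ z i - mtT J n γ zb i‖^2
      = ∑ i ∈ Finset.range (n-1),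
          ‖(z i - zb i) + γ • ((x (i+1) - xb (i+1)) - (x i - xb i))‖^2 :=
        Finset.sum_congr rfl fun i _ => by rw [hTpt i]
    _ ≤ (1 - δ/C) * ∑ i ∈ Finset.range (n-1), ‖z i - zb i‖^2 := main
end

section
/- Let $n\geq 2$ and $\gamma\in(0,1)$. If $A_1,\dots,A_{n-1}:\mathcal{H}\to\mathcal{H}$ are maximally $\mu$-strongly monotone ($\mu>0$) and $L$-Lipschitz, and $A_n:\mathcal{H}\rightrightarrows\mathcal{H}$ is maximally monotone, then $T_{\rm MT}$ is a $\beta$-contraction with $\beta=\sqrt{1-2\gamma\mu\eta}$ for some $\eta\in(0,1)$. -/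
open scoped RealInnerProductSpace

section auxlem
variable {H : Type*} [NormedAddCommGroup H] [InnerProductSpace ℝ H]

lemma mt_alg1 (q r t : H) :
    ⟪q, t - q⟫ + ⟪t, r - q⟫ + (1/2)*‖r - q‖^2
      = (⟪t, r⟫ + (1/2)*‖r‖^2 - ⟪r, q⟫) - (1/2)*‖q‖^2 := by
  rw [norm_sub_sq_real]
  simp only [inner_sub_right]
  rw [real_inner_comm q t, real_inner_comm q r, real_inner_self_eq_norm_sq]
  ring

lemma mt_alg2 (p q r s t : H) :
    ⟪q, t + p - s - q⟫ + ⟪t, r - q⟫ + (1/2)*‖r - q‖^2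
      = (⟪t, r⟫ + (1/2)*‖r‖^2 - ⟪r, q⟫) - (⟪s, q⟫ + (1/2)*‖q‖^2 - ⟪q, p⟫) := by
  rw [norm_sub_sq_real]
  simp only [inner_sub_right, inner_add_right]
  rw [real_inner_comm q t, real_inner_comm q r, real_inner_comm q s, real_inner_self_eq_norm_sq]
  ring

lemma mt_alg3 (p q r s : H) :
    (⟪s, r⟫ + (1/2)*‖r‖^2 - ⟪r, q⟫) + ⟪r, p + q - s - r⟫ - (1/2)*‖p‖^2
      = -(1/2)*‖r - p‖^2 := by
  rw [norm_sub_sq_real]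
  simp only [inner_sub_right, inner_add_right]
  rw [real_inner_self_eq_norm_sq, real_inner_comm s r]
  ring

end auxlem

set_option maxHeartbeats 4000000 in
/-- If `A 0, …, A (n-2)` are maximally `μ`-strongly monotone (`μ > 0`) and
`L`-Lipschitz and `A (n-1)` is maximally monotone, then `T_MT` is a `β`-contraction
with `β = √(1 - 2γμη)` for some `η ∈ (0,1)` (in the product norm on `H^{n-1}`). -/
theorem malitskyTam_contraction_case_b
    {H : Type*} [NormedAddCommGroup H] [InnerProductSpace ℝ H]
    (n : ℕ) (hn : 2 ≤ n) (γ : ℝ) (hγ : γ ∈ Set.Ioo (0 : ℝ) 1)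
    (L μ : ℝ) (hL : 0 ≤ L) (hμ : 0 < μ)
    (a : ℕ → H → H) (An : H → Set H)
    (ha : ∀ i, i ≤ n - 2 → IsMaxMonotoneOp (fun x => {a i x}) μ)
    (halip : ∀ i, i ≤ n - 2 → ∀ x y : H, ‖a i x - a i y‖ ≤ L * ‖x - y‖)
    (hAn : IsMaxMonotoneOp An 0)
    (J : ℕ → H → H)
    (hJ : ∀ i, i ≤ n - 2 → ∀ w : H, w - J i w = a i (J i w))
    (hJn : ∀ w : H, w - J (n - 1) w ∈ An (J (n - 1) w)) :
    ∃ η : ℝ, 0 < η ∧ η < 1 ∧ 0 < 1 - 2 * γ * μ * η ∧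
      ∀ z zb : ℕ → H,
        ∑ i ∈ Finset.range (n - 1), ‖mtT J n γ z i - mtT J n γ zb i‖ ^ 2 ≤
          Real.sqrt (1 - 2 * γ * μ * η) ^ 2 *
            ∑ i ∈ Finset.range (n - 1), ‖z i - zb i‖ ^ 2 := by
  have hγ0 : (0:ℝ) < γ := hγ.1
  have hγ1 : γ < 1 := hγ.2
  set N := n - 1 with hNdef
  have hN1 : 1 ≤ N := by omega
  set C : ℝ := (2+L)^2 * (N:ℝ)^2 with hCdef
  have hNR : (1:ℝ) ≤ (N:ℝ) := by exact_mod_cast hN1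
  have hC4 : 4 ≤ C := by
    have h1 : (4:ℝ) ≤ (2+L)^2 := by nlinarith
    have h2 : (1:ℝ) ≤ (N:ℝ)^2 := by nlinarith
    nlinarith
  have hC0 : 0 < C := by linarith
  have hγμ : 0 < 2*γ*μ := by positivity
  set η : ℝ := 1/(C*(1+2*γ*μ)) with hηdef
  have hη0 : 0 < η := by positivity
  have hη1 : η < 1 := by
    rw [hηdef, div_lt_one (by nlinarith)]
    nlinarith
  have hβ : 0 < 1 - 2*γ*μ*η := by
    have h1 : 2*γ*μ*η = (2*γ*μ)/(C*(1+2*γ*μ)) := by rw [hηdef]; ring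
    have h2 : (2*γ*μ)/(C*(1+2*γ*μ)) < 1 := by
      rw [div_lt_one (by nlinarith)]
      nlinarith
    linarith
  refine ⟨η, hη0, hη1, by linarith [hβ], ?_⟩
  intro z zb
  have hβ' : 0 ≤ 1 - 2 * γ * μ * η := by linarith
  rw [Real.sq_sqrt hβ']
  set x : ℕ → H := mtX J n z with hx
  set xb : ℕ → H := mtX J n zb with hxb
  set u : ℕ → H := fun i => x i - xb i with hu
  set w : ℕ → H := fun i => z i - zb i with hw
  -- basic facts about x
  have hxlt : ∀ i, i < N → x i = mtAux J z i := by
    intro i hi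
    rw [hx]; simp only [mtX]; rw [if_neg (by omega)]
  have hxblt : ∀ i, i < N → xb i = mtAux J zb i := by
    intro i hi
    rw [hxb]; simp only [mtX]; rw [if_neg (by omega)]
  have hx0 : x 0 = J 0 (z 0) := by rw [hxlt 0 (by omega)]; rfl
  have hxb0 : xb 0 = J 0 (zb 0) := by rw [hxblt 0 (by omega)]; rfl
  have e0 : z 0 - x 0 = a 0 (x 0) := by rw [hx0]; exact hJ 0 (by omega) (z 0)
  have e0b : zb 0 - xb 0 = a 0 (xb 0) := by rw [hxb0]; exact hJ 0 (by omega) (zb 0)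
  have eS : ∀ j, j + 1 < N → z (j+1) + x j - z j - x (j+1) = a (j+1) (x (j+1)) := by
    intro j hj
    have h1 : x (j+1) = J (j+1) (z (j+1) + x j - z j) := by
      rw [hxlt _ hj, hxlt j (by omega)]; rfl
    rw [h1]
    exact hJ (j+1) (by omega) _
  have eSb : ∀ j, j + 1 < N → zb (j+1) + xb j - zb j - xb (j+1) = a (j+1) (xb (j+1)) := by
    intro j hj
    have h1 : xb (j+1) = J (j+1) (zb (j+1) + xb j - zb j) := by
      rw [hxblt _ hj, hxblt j (by omega)]; rfl
    rw [h1]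
    exact hJ (j+1) (by omega) _
  have eN : x N = J (n-1) (x 0 + x (N-1) - z (N-1)) := by
    have h2 : n - 2 = N - 1 := by omega
    rw [hxlt 0 (by omega), hxlt (N-1) (by omega), hx]
    simp only [mtX]
    rw [if_pos hNdef, h2]
  have eNb : xb N = J (n-1) (xb 0 + xb (N-1) - zb (N-1)) := by
    have h2 : n - 2 = N - 1 := by omega
    rw [hxblt 0 (by omega), hxblt (N-1) (by omega), hxb]
    simp only [mtX]
    rw [if_pos hNdef, h2]
  -- the input differences
  set g : ℕ → H := fun i => if i = 0 then w 0 else w i + u (i-1) - w (i-1) with hg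
  -- monotonicity
  have mono : ∀ i, i < N → μ * ‖u i‖^2 ≤ ⟪u i, g i - u i⟫ := by
    intro i hi
    rcases i with _ | j
    · have m := (ha 0 (by omega)).1 (Set.mem_singleton (a 0 (x 0))) (Set.mem_singleton (a 0 (xb 0)))
      have h2 : x 0 - xb 0 = u 0 := by simp [hu]
      have h3 : a 0 (x 0) - a 0 (xb 0) = g 0 - u 0 := by
        rw [← e0, ← e0b]
        simp only [hg, hu, hw, if_pos rfl]
        abel
      rw [h2, h3] at m
      exact m
    · have e1 := eS j hi
      have e1b := eSb j hi
      have m := (ha (j+1) (by omega)).1 (Set.mem_singleton (a (j+1) (x (j+1))))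
        (Set.mem_singleton (a (j+1) (xb (j+1))))
      rw [← e1, ← e1b] at m
      have h2 : x (j+1) - xb (j+1) = u (j+1) := by simp [hu]
      have h3 : (z (j+1) + x j - z j - x (j+1)) - (zb (j+1) + xb j - zb j - xb (j+1))
          = g (j+1) - u (j+1) := by
        simp only [hg, hu, hw, if_neg (Nat.succ_ne_zero j), Nat.add_sub_cancel]
        abel
      rw [h2, h3] at m
      exact m
  have monoN : 0 ≤ ⟪u N, u 0 + u (N-1) - w (N-1) - u N⟫ := by
    have mem1 : (x 0 + x (N-1) - z (N-1)) - x N ∈ An (x N) := by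
      rw [eN]
      exact hJn _
    have mem1b : (xb 0 + xb (N-1) - zb (N-1)) - xb N ∈ An (xb N) := by
      rw [eNb]
      exact hJn _
    have m := hAn.1 mem1 mem1b
    have h2 : x N - xb N = u N := by simp [hu]
    have h3 : ((x 0 + x (N-1) - z (N-1)) - x N) - ((xb 0 + xb (N-1) - zb (N-1)) - xb N)
        = u 0 + u (N-1) - w (N-1) - u N := by
      simp only [hu, hw]
      abel
    rw [h2, h3, zero_mul] at m
    exact m
  -- Lipschitz lower bound machinery
  have lip : ∀ i, i < N → ‖w i‖ ≤ (1+L) * (∑ j ∈ Finset.range (i+1), ‖u j‖)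
      + ∑ j ∈ Finset.range i, ‖u j‖ := by
    intro i
    induction i with
    | zero =>
      intro _
      have h1 : w 0 = u 0 + (a 0 (x 0) - a 0 (xb 0)) := by
        rw [← e0, ← e0b]
        simp only [hu, hw]
        abel
      have h2 : ‖a 0 (x 0) - a 0 (xb 0)‖ ≤ L * ‖u 0‖ := by
        have := halip 0 (by omega) (x 0) (xb 0)
        simpa [hu] using this
      calc ‖w 0‖ ≤ ‖u 0‖ + ‖a 0 (x 0) - a 0 (xb 0)‖ := by rw [h1]; exact norm_add_le _ _
        _ ≤ ‖u 0‖ + L * ‖u 0‖ := by linarith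
        _ ≤ (1+L) * (∑ j ∈ Finset.range 1, ‖u j‖) + ∑ j ∈ Finset.range 0, ‖u j‖ := by
            simp [Finset.sum_range_one]; ring_nf; simp
    | succ j ih =>
      intro hi
      have hj : j < N := by omega
      have e1 := eS j hi
      have e1b := eSb j hi
      have h1 : w (j+1) = u (j+1) + (a (j+1) (x (j+1)) - a (j+1) (xb (j+1))) + w j - u j := by
        rw [← e1, ← e1b]
        simp only [hu, hw]
        abel
      have h2 : ‖a (j+1) (x (j+1)) - a (j+1) (xb (j+1))‖ ≤ L * ‖u (j+1)‖ := by
        have := halip (j+1) (by omega) (x (j+1)) (xb (j+1))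
        simpa [hu] using this
      have h3 : ‖w (j+1)‖ ≤ ‖u (j+1)‖ + L * ‖u (j+1)‖ + ‖w j‖ + ‖u j‖ := by
        rw [h1]
        calc ‖u (j+1) + (a (j+1) (x (j+1)) - a (j+1) (xb (j+1))) + w j - u j‖
            ≤ ‖u (j+1) + (a (j+1) (x (j+1)) - a (j+1) (xb (j+1))) + w j‖ + ‖u j‖ :=
              norm_sub_le _ _
          _ ≤ ‖u (j+1) + (a (j+1) (x (j+1)) - a (j+1) (xb (j+1)))‖ + ‖w j‖ + ‖u j‖ := by
              have := norm_add_le (u (j+1) + (a (j+1) (x (j+1)) - a (j+1) (xb (j+1)))) (w j)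
              linarith
          _ ≤ ‖u (j+1)‖ + ‖a (j+1) (x (j+1)) - a (j+1) (xb (j+1))‖ + ‖w j‖ + ‖u j‖ := by
              have := norm_add_le (u (j+1)) (a (j+1) (x (j+1)) - a (j+1) (xb (j+1)))
              linarith
          _ ≤ ‖u (j+1)‖ + L * ‖u (j+1)‖ + ‖w j‖ + ‖u j‖ := by linarith
      have ih' := ih hj
      simp only [Finset.sum_range_succ] at ih' ⊢
      nlinarith [ih', h3]
  -- abbreviations for the real sums
  set U : ℝ := ∑ i ∈ Finset.range N, ‖u i‖^2 with hUdef
  set W : ℝ := ∑ i ∈ Finset.range N, ‖w i‖^2 with hWdef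
  set T : ℝ := ∑ i ∈ Finset.range N, ⟪w i, u (i+1) - u i⟫ with hTdef
  set S : ℝ := ∑ i ∈ Finset.range N, ‖u (i+1) - u i‖^2 with hSdef
  have hU0 : 0 ≤ U := Finset.sum_nonneg (fun i _ => by positivity)
  have hW0 : 0 ≤ W := Finset.sum_nonneg (fun i _ => by positivity)
  have hS0 : 0 ≤ S := Finset.sum_nonneg (fun i _ => by positivity)
  -- W ≤ C * U
  have hWCU : W ≤ C * U := by
    have lip2 : ∀ i ∈ Finset.range N, ‖w i‖^2 ≤ (2+L)^2 * ((N:ℝ) * U) := by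
      intro i hi
      rw [Finset.mem_range] at hi
      have h1 := lip i hi
      have hsub : ∀ m, m ≤ N → ∑ j ∈ Finset.range m, ‖u j‖ ≤ ∑ j ∈ Finset.range N, ‖u j‖ := by
        intro m hm
        exact Finset.sum_le_sum_of_subset_of_nonneg
          (Finset.range_subset_range.mpr hm) (fun k _ _ => norm_nonneg _)
      have h2 := hsub (i+1) (by omega)
      have h3 := hsub i (by omega)
      have hSnn : 0 ≤ ∑ j ∈ Finset.range N, ‖u j‖ :=
        Finset.sum_nonneg (fun k _ => norm_nonneg _)
      have h4 : ‖w i‖ ≤ (2+L) * ∑ j ∈ Finset.range N, ‖u j‖ := by nlinarith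
      have h5 : ‖w i‖^2 ≤ ((2+L) * ∑ j ∈ Finset.range N, ‖u j‖)^2 :=
        pow_le_pow_left₀ (norm_nonneg _) h4 2
      have h6 : (∑ j ∈ Finset.range N, ‖u j‖)^2 ≤ (N:ℝ) * U := by
        have := sq_sum_le_card_mul_sum_sq (s := Finset.range N) (f := fun j => ‖u j‖)
        simpa [hUdef] using this
      nlinarith [sq_nonneg (2+L)]
    calc W ≤ ∑ _i ∈ Finset.range N, (2+L)^2 * ((N:ℝ) * U) := Finset.sum_le_sum lip2
      _ = (N:ℝ) * ((2+L)^2 * ((N:ℝ) * U)) := by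
          rw [Finset.sum_const, Finset.card_range, nsmul_eq_mul]
      _ = C * U := by rw [hCdef]; ring
  -- telescoping identity
  set G : ℕ → ℝ := fun i => if i = 0 then (1/2)*‖u 0‖^2
      else ⟪w (i-1), u i⟫ + (1/2)*‖u i‖^2 - ⟪u i, u (i-1)⟫ with hG
  have htel : ∑ i ∈ Finset.range N,
      (⟪u i, g i - u i⟫ + ⟪w i, u (i+1) - u i⟫ + (1/2)*‖u (i+1) - u i‖^2) = G N - G 0 := by
    rw [← Finset.sum_range_sub G N]
    apply Finset.sum_congr rfl
    intro i _
    rcases i with _ | j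
    · simp only [hg, hG, if_pos rfl, if_neg (Nat.succ_ne_zero 0), Nat.add_sub_cancel]
      exact mt_alg1 (u 0) (u 1) (w 0)
    · simp only [hg, hG, if_neg (Nat.succ_ne_zero j), if_neg (Nat.succ_ne_zero (j+1)),
        Nat.add_sub_cancel]
      exact mt_alg2 (u j) (u (j+1)) (u (j+2)) (w j) (w (j+1))
  have hGN : G N + ⟪u N, u 0 + u (N-1) - w (N-1) - u N⟫ - (1/2)*‖u 0‖^2
      = -(1/2)*‖u N - u 0‖^2 := by
    obtain ⟨m, hm⟩ : ∃ m, N = m + 1 := ⟨N - 1, by omega⟩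
    rw [hm]
    simp only [hG, if_neg (Nat.succ_ne_zero m), Nat.add_sub_cancel]
    exact mt_alg3 (u 0) (u m) (u (m+1)) (w m)
  -- key bound on T
  have hsplit : ∑ i ∈ Finset.range N,
      (⟪u i, g i - u i⟫ + ⟪w i, u (i+1) - u i⟫ + (1/2)*‖u (i+1) - u i‖^2)
      = (∑ i ∈ Finset.range N, ⟪u i, g i - u i⟫) + T + (1/2)*S := by
    rw [Finset.sum_add_distrib, Finset.sum_add_distrib, ← Finset.mul_sum, hTdef, hSdef]
  have hmonoSum : μ * U ≤ ∑ i ∈ Finset.range N, ⟪u i, g i - u i⟫ := by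
    rw [hUdef, Finset.mul_sum]
    exact Finset.sum_le_sum (fun i hi => mono i (Finset.mem_range.mp hi))
  have hG0 : G 0 = (1/2)*‖u 0‖^2 := by simp [hG]
  have hT : T ≤ -(1/2)*S - μ*U := by
    have h1 : (∑ i ∈ Finset.range N, ⟪u i, g i - u i⟫) + T + (1/2)*S = G N - G 0 := by
      rw [← hsplit]; exact htel
    have h2 : 0 ≤ ‖u N - u 0‖^2 := by positivity
    rw [hG0] at h1
    nlinarith [hmonoSum, monoN, hGN]
  -- η * W ≤ U
  have hηW : η * W ≤ U := by
    have hηC : η * C = 1/(1+2*γ*μ) := by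
      rw [hηdef]
      field_simp
    have h1 : η * W ≤ η * (C * U) := by
      apply mul_le_mul_of_nonneg_left hWCU hη0.le
    have h2 : η * (C * U) = (η * C) * U := by ring
    have h3 : (η * C) * U ≤ 1 * U := by
      apply mul_le_mul_of_nonneg_right _ hU0
      rw [hηC]
      rw [div_le_one (by linarith)]
      linarith
    linarith
  -- final expansion and assembly
  have hexp : ∀ i ∈ Finset.range N, ‖mtT J n γ z i - mtT J n γ zb i‖^2
      = ‖w i‖^2 + 2*γ*⟪w i, u (i+1) - u i⟫ + γ^2*‖u (i+1) - u i‖^2 := by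
    intro i _
    have hd : mtT J n γ z i - mtT J n γ zb i = w i + γ • (u (i+1) - u i) := by
      simp only [mtT, ← hx, ← hxb, hu, hw, smul_sub]
      abel
    rw [hd, norm_add_sq_real, real_inner_smul_right, norm_smul, Real.norm_eq_abs,
      abs_of_pos hγ0, mul_pow]
    ring
  have hLHS : ∑ i ∈ Finset.range N, ‖mtT J n γ z i - mtT J n γ zb i‖^2
      = W + 2*γ*T + γ^2*S := by
    rw [Finset.sum_congr rfl hexp, Finset.sum_add_distrib, Finset.sum_add_distrib,
      ← Finset.mul_sum, ← Finset.mul_sum, hWdef, hTdef, hSdef]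
  rw [hLHS]
  clear_value N C η x xb u w g G U W T S
  -- final arithmetic
  have f1 : 2*γ*T ≤ 2*γ*(-(1/2)*S - μ*U) :=
    mul_le_mul_of_nonneg_left hT (by linarith)
  have f2 : γ^2*S ≤ γ*S := by
    have h : 0 ≤ γ*(1-γ)*S := mul_nonneg (mul_nonneg hγ0.le (by linarith)) hS0
    nlinarith [h]
  have f3 : 2*γ*μ*(η*W) ≤ 2*γ*μ*U := mul_le_mul_of_nonneg_left hηW (by linarith)
  have f1' : 2*γ*(-(1/2)*S - μ*U) = -(γ*S) - 2*γ*μ*U := by ring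
  have f3' : 2*γ*μ*(η*W) = 2*γ*μ*η*W := by ring
  linarith [f1, f2, f3, f1', f3']
end

section
/- Under either of the hypotheses (a) $A_1,\dots,A_{n-1}$ maximally monotone and $L$-Lipschitz with $A_n$ maximally $\mu$-strongly monotone, or (b) $A_1,\dots,A_{n-1}$ maximally $\mu$-strongly monotone and $L$-Lipschitz with $A_n$ maximally monotone, the sequence $\mathbf{z}^{k+1}=T_{\rm MT}(\mathbf{z}^k)$ converges R-linearly to the unique fixed point of $T_{\rm MT}$, and the shadow sequence $\mathbf{x}^k=(x_1^k,\dots,x_n^k)$ converges R-linearly to $(x^*,\dots,x^*)$ where $x^*$ is the unique zero of $\sum_{i=1}^n A_i$. Explicitly, if $\|\mathbf{z}^k-\mathbf{z}^*\|\leq c\beta^k$, then $\|x_i^k-x^*\|\leq(2i-1)c\beta^k$ for each $i$. -/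
open scoped RealInnerProductSpace

section MT
variable {H : Type*} [NormedAddCommGroup H] [InnerProductSpace ℝ H]

/-- monotone with nonneg modulus implies 0-monotone -/
lemma mono_zero {A : H → Set H} {μ : ℝ} (h : IsMonotoneOp A μ) (hμ : 0 ≤ μ) :
    IsMonotoneOp A 0 := fun x y u v hu hv => by
  have := h hu hv
  nlinarith [sq_nonneg ‖x - y‖, norm_nonneg (x - y)]

/-- nonexpansiveness of a resolvent selection of a 0-monotone operator -/
lemma resolvent_nonexpansive {A : H → Set H} (hA : IsMonotoneOp A 0) {Ji : H → H}
    (hJ : ∀ w : H, w - Ji w ∈ A (Ji w)) (w w' : H) : ‖Ji w - Ji w'‖ ≤ ‖w - w'‖ := by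
  have h := hA (hJ w) (hJ w')
  have h2 : ‖Ji w - Ji w'‖ ^ 2 ≤ ⟪Ji w - Ji w', w - w'⟫ := by
    have expand : (w - Ji w) - (w' - Ji w') = (w - w') - (Ji w - Ji w') := by abel
    rw [expand, inner_sub_right, real_inner_self_eq_norm_sq] at h
    linarith
  have h3 := real_inner_le_norm (Ji w - Ji w') (w - w')
  nlinarith [norm_nonneg (Ji w - Ji w'), norm_nonneg (w - w')]

lemma mtX_eq (J : ℕ → H → H) (m : ℕ) (z : ℕ → H) (i : ℕ) :
    mtX J (m + 2) z i =
      if i = m + 1 then J (m + 1) (mtAux J z 0 + mtAux J z m - z m) else mtAux J z i := by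
  simp [mtX]

lemma mtX_of_lt (J : ℕ → H → H) (m : ℕ) (z : ℕ → H) {i : ℕ} (hi : i ≤ m) :
    mtX J (m + 2) z i = mtAux J z i := by
  rw [mtX_eq]; rw [if_neg]; omega

lemma mtX_last (J : ℕ → H → H) (m : ℕ) (z : ℕ → H) :
    mtX J (m + 2) z (m + 1) = J (m + 1) (mtAux J z 0 + mtAux J z m - z m) := by
  rw [mtX_eq, if_pos rfl]

/-- locality: mtAux at index i depends only on z at indices ≤ i -/
lemma mtAux_local (J : ℕ → H → H) (z z' : ℕ → H) (i : ℕ) (h : ∀ j, j ≤ i → z j = z' j) :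
    mtAux J z i = mtAux J z' i := by
  induction i with
  | zero => simp [mtAux, h 0 (le_refl 0)]
  | succ i ih =>
    have hz : ∀ j, j ≤ i → z j = z' j := fun j hj => h j (Nat.le_succ_of_le hj)
    simp only [mtAux, ih hz, h i (Nat.le_succ i), h (i+1) (le_refl _)]

lemma mtX_local (J : ℕ → H → H) (m : ℕ) (z z' : ℕ → H) (i : ℕ) (hi : i ≤ m + 1)
    (h : ∀ j, j ≤ m → z j = z' j) : mtX J (m + 2) z i = mtX J (m + 2) z' i := by
  rcases Nat.lt_or_ge i (m+1) with hlt | hge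
  · rw [mtX_of_lt J m z (by omega), mtX_of_lt J m z' (by omega)]
    exact mtAux_local J z z' i (fun j hj => h j (by omega))
  · have : i = m + 1 := by omega
    subst this
    rw [mtX_last, mtX_last, mtAux_local J z z' 0 (fun j hj => h j (by omega)),
      mtAux_local J z z' m (fun j hj => h j (by omega)), h m (le_refl m)]

lemma mtT_local (J : ℕ → H → H) (m : ℕ) (γ : ℝ) (z z' : ℕ → H) (i : ℕ) (hi : i ≤ m)
    (h : ∀ j, j ≤ m → z j = z' j) : mtT J (m + 2) γ z i = mtT J (m + 2) γ z' i := by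
  unfold mtT
  rw [mtX_local J m z z' i (by omega) h, mtX_local J m z z' (i+1) (by omega) h, h i hi]

/-- input to the `i`-th resolvent in the MT recursion -/
def mtWin (J : ℕ → H → H) (m : ℕ) (z : ℕ → H) (i : ℕ) : H :=
  if i = 0 then z 0
  else if i = m + 1 then mtAux J z 0 + mtAux J z m - z m
  else z i + mtAux J z (i - 1) - z (i - 1)

lemma mtX_eq_J_mtWin (J : ℕ → H → H) (m : ℕ) (z : ℕ → H) {i : ℕ} (hi : i ≤ m + 1) :
    mtX J (m + 2) z i = J i (mtWin J m z i) := by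
  rcases Nat.eq_or_lt_of_le hi with heq | hlt
  · subst heq; rw [mtX_last]; simp [mtWin]
  · have him : i ≤ m := by omega
    rw [mtX_of_lt J m z him]
    cases i with
    | zero => simp [mtWin, mtAux]
    | succ j =>
      have h1 : j + 1 ≠ 0 := by omega
      have h2 : j + 1 ≠ m + 1 := by omega
      simp only [mtWin, if_neg h1, if_neg h2, Nat.add_sub_cancel]
      rfl

/-- the residual of the `i`-th resolvent belongs to `A i` at the shadow point -/
lemma mtX_residual_mem {A : ℕ → H → Set H} (J : ℕ → H → H) (m : ℕ)
    (hJ : ∀ i, i < m + 2 → ∀ w : H, w - J i w ∈ A i (J i w)) (z : ℕ → H) {i : ℕ}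
    (hi : i ≤ m + 1) :
    mtWin J m z i - mtX J (m + 2) z i ∈ A i (mtX J (m + 2) z i) := by
  rw [mtX_eq_J_mtWin J m z hi]
  exact hJ i (by omega) (mtWin J m z i)

/-- formulas for the difference of residual inputs -/
lemma mtWin_zero (J : ℕ → H → H) (m : ℕ) (z : ℕ → H) : mtWin J m z 0 = z 0 := by
  simp [mtWin]

lemma mtWin_mid (J : ℕ → H → H) (m : ℕ) (z : ℕ → H) {i : ℕ} (h1 : 1 ≤ i) (h2 : i ≤ m) :
    mtWin J m z i = z i + mtX J (m + 2) z (i - 1) - z (i - 1) := by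
  have h3 : i ≠ 0 := by omega
  have h4 : i ≠ m + 1 := by omega
  rw [mtWin, if_neg h3, if_neg h4, mtX_of_lt J m z (by omega)]

lemma mtWin_top (J : ℕ → H → H) (m : ℕ) (z : ℕ → H) :
    mtWin J m z (m + 1) = mtX J (m + 2) z 0 + mtX J (m + 2) z m - z m := by
  have h3 : m + 1 ≠ 0 := by omega
  rw [mtWin, if_neg h3, if_pos rfl, mtX_of_lt J m z (Nat.zero_le m),
    mtX_of_lt J m z (le_refl m)]

/-- Key algebraic identity for the Malitsky–Tam operator. -/
lemma key_identity (q : ℕ) (d e : ℕ → H) :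
    ⟪d 0, e 0 - d 0⟫ +
      (∑ i ∈ Finset.range q, ⟪d (i+1), (e (i+1) - e i) + (d i - d (i+1))⟫) +
      ⟪d (q+1), d 0 + d q - e q - d (q+1)⟫
    = (∑ i ∈ Finset.range (q+1), ⟪d i - d (i+1), e i⟫) -
      (1/2) * ((∑ i ∈ Finset.range (q+1), ‖d (i+1) - d i‖^2) + ‖d (q+1) - d 0‖^2) := by
  induction q with
  | zero =>
    simp only [Finset.range_zero, Finset.sum_empty, Finset.range_one, Finset.sum_singleton,
      add_zero, zero_add]
    have h1 := norm_sub_sq_real (d 1) (d 0)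
    simp only [inner_sub_left, inner_sub_right, inner_add_right, real_inner_self_eq_norm_sq]
    linarith [h1]
  | succ q ih =>
    rw [Finset.sum_range_succ, Finset.sum_range_succ (fun i => ⟪d i - d (i+1), e i⟫),
      Finset.sum_range_succ (fun i => ‖d (i+1) - d i‖^2)]
    have goal_reduce :
        ⟪d (q+1), (e (q+1) - e q) + (d q - d (q+1))⟫ +
        ⟪d (q+1+1), d 0 + d (q+1) - e (q+1) - d (q+1+1)⟫ -
        ⟪d (q+1), d 0 + d q - e q - d (q+1)⟫
        = ⟪d (q+1) - d (q+1+1), e (q+1)⟫ -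
          (1/2) * (‖d (q+1+1) - d (q+1)‖^2 + ‖d (q+1+1) - d 0‖^2 - ‖d (q+1) - d 0‖^2) := by
      have h1 := norm_sub_sq_real (d (q+2)) (d (q+1))
      have h2 := norm_sub_sq_real (d (q+2)) (d 0)
      have h3 := norm_sub_sq_real (d (q+1)) (d 0)
      have c1 := real_inner_comm (d (q+2)) (d (q+1))
      have c2 := real_inner_comm (d (q+2)) (d 0)
      have c3 := real_inner_comm (d (q+1)) (d 0)
      simp only [inner_sub_left, inner_sub_right, inner_add_left, inner_add_right,
        real_inner_self_eq_norm_sq] at *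
      nlinarith [h1, h2, h3]
    linarith [ih, goal_reduce]

lemma stepA (m : ℕ) {γ : ℝ} (hγ0 : 0 < γ) (hγ1 : γ < 1) (d e : ℕ → H) (M : ℝ)
    (hMono : M ≤ ⟪d 0, e 0 - d 0⟫ +
      (∑ i ∈ Finset.range m, ⟪d (i+1), (e (i+1) - e i) + (d i - d (i+1))⟫) +
      ⟪d (m+1), d 0 + d m - e m - d (m+1)⟫) :
    ∑ i ∈ Finset.range (m+1), ‖e i + γ • (d (i+1) - d i)‖^2
      ≤ (∑ i ∈ Finset.range (m+1), ‖e i‖^2)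
        - γ*(1-γ) * (∑ i ∈ Finset.range (m+1), ‖d (i+1) - d i‖^2) - 2*γ*M := by
  have hid := key_identity m d e
  set S := ∑ i ∈ Finset.range (m+1), ⟪d i - d (i+1), e i⟫ with hSdef
  set SD := ∑ i ∈ Finset.range (m+1), ‖d (i+1) - d i‖^2 with hDdef
  set P := ‖d (m+1) - d 0‖^2 with hPdef
  have hS : (1/2) * (SD + P) + M ≤ S := by rw [hid] at hMono; linarith
  have expand : ∀ i ∈ Finset.range (m+1), ‖e i + γ • (d (i+1) - d i)‖^2
      = ‖e i‖^2 - 2*γ*⟪d i - d (i+1), e i⟫ + γ^2*‖d (i+1) - d i‖^2 := by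
    intro i _
    have h := norm_add_sq_real (e i) (γ • (d (i+1) - d i))
    rw [real_inner_smul_right] at h
    have hn : ‖γ • (d (i+1) - d i)‖^2 = γ^2 * ‖d (i+1) - d i‖^2 := by
      rw [norm_smul, mul_pow, Real.norm_eq_abs, sq_abs]
    have hflip : ⟪d i - d (i+1), e i⟫ = -⟪e i, d (i+1) - d i⟫ := by
      rw [real_inner_comm, ← inner_neg_right]
      congr 1; abel
    rw [hn] at h
    rw [h, hflip]; ring
  rw [Finset.sum_congr rfl expand]
  have split : ∑ i ∈ Finset.range (m+1),
      (‖e i‖^2 - 2*γ*⟪d i - d (i+1), e i⟫ + γ^2*‖d (i+1) - d i‖^2)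
      = (∑ i ∈ Finset.range (m+1), ‖e i‖^2) - 2*γ*S + γ^2*SD := by
    rw [hSdef, hDdef, Finset.mul_sum, Finset.mul_sum, ← Finset.sum_sub_distrib,
      ← Finset.sum_add_distrib]
  rw [split]
  have hP0 : 0 ≤ P := sq_nonneg _
  nlinarith [mul_le_mul_of_nonneg_left hS (le_of_lt hγ0)]

lemma ebound (m : ℕ) (L : ℝ) (hL : 0 ≤ L) (d e w : ℕ → H)
    (h0 : e 0 = d 0 + w 0)
    (hrec : ∀ i, i + 1 ≤ m → e (i+1) = e i + (d (i+1) - d i) + w (i+1))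
    (hw : ∀ i, i ≤ m → ‖w i‖ ≤ L * ‖d i‖) :
    ∑ i ∈ Finset.range (m+1), ‖e i‖^2
      ≤ 2*((m:ℝ)+1)^2 * ((1+L)^2 * (∑ i ∈ Finset.range (m+1), ‖d i‖^2)
          + ∑ i ∈ Finset.range (m+1), ‖d (i+1) - d i‖^2) := by
  set S1 := ∑ i ∈ Finset.range (m+1), ‖d i‖ with hS1
  set S2 := ∑ i ∈ Finset.range (m+1), ‖d (i+1) - d i‖ with hS2
  have hS1nonneg : 0 ≤ S1 := Finset.sum_nonneg fun _ _ => norm_nonneg _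
  have hS2nonneg : 0 ≤ S2 := Finset.sum_nonneg fun _ _ => norm_nonneg _
  -- partial sums bounds
  have partial1 : ∀ i, i ≤ m → ∑ j ∈ Finset.range (i+1), ‖d j‖ ≤ S1 := fun i hi =>
    Finset.sum_le_sum_of_subset_of_nonneg
      (Finset.range_subset_range.2 (by omega)) (fun _ _ _ => norm_nonneg _)
  have partial2 : ∀ i, i ≤ m+1 → ∑ j ∈ Finset.range i, ‖d (j+1) - d j‖ ≤ S2 := fun i hi =>
    Finset.sum_le_sum_of_subset_of_nonneg
      (Finset.range_subset_range.2 (by omega)) (fun _ _ _ => norm_nonneg _)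
  have claim : ∀ i, i ≤ m → ‖e i‖ ≤ (1+L) * (∑ j ∈ Finset.range (i+1), ‖d j‖)
      + ∑ j ∈ Finset.range i, ‖d (j+1) - d j‖ := by
    intro i
    induction i with
    | zero =>
      intro _
      have hs : (∑ j ∈ Finset.range (0+1), ‖d j‖) = ‖d 0‖ := by simp
      have hs0 : (∑ j ∈ Finset.range 0, ‖d (j+1) - d j‖) = (0:ℝ) := by simp
      rw [hs, hs0, add_zero, h0]
      calc ‖d 0 + w 0‖ ≤ ‖d 0‖ + ‖w 0‖ := norm_add_le _ _
        _ ≤ ‖d 0‖ + L * ‖d 0‖ := by linarith [hw 0 (Nat.zero_le m)]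
        _ = (1+L) * ‖d 0‖ := by ring
    | succ i ih =>
      intro hi
      have hii : i ≤ m := by omega
      have h1 := ih hii
      rw [hrec i hi]
      have tri : ‖e i + (d (i+1) - d i) + w (i+1)‖ ≤ ‖e i‖ + ‖d (i+1) - d i‖ + ‖w (i+1)‖ :=
        le_trans (norm_add_le _ _) (by linarith [norm_add_le (e i) (d (i+1) - d i)])
      have hw1 := hw (i+1) hi
      rw [Finset.sum_range_succ (fun j => ‖d j‖) (i+1),
        Finset.sum_range_succ (fun j => ‖d (j+1) - d j‖) i]
      have hd1 : (0:ℝ) ≤ ‖d (i+1)‖ := norm_nonneg _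
      nlinarith [tri, hw1, h1]
  have ebd : ∀ i, i ≤ m → ‖e i‖ ≤ (1+L) * S1 + S2 := by
    intro i hi
    have := claim i hi
    have p1 := partial1 i hi
    have p2 := partial2 i (by omega)
    nlinarith
  set B := (1+L) * S1 + S2 with hB
  have hBnonneg : 0 ≤ B := by positivity
  have hsum : ∑ i ∈ Finset.range (m+1), ‖e i‖^2 ≤ ((m:ℝ)+1) * B^2 := by
    have h1 : ∑ i ∈ Finset.range (m+1), ‖e i‖^2 ≤ ∑ _i ∈ Finset.range (m+1), B^2 := by
      apply Finset.sum_le_sum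
      intro i hi
      have hi' : i ≤ m := Nat.lt_succ_iff.1 (Finset.mem_range.1 hi)
      exact pow_le_pow_left₀ (norm_nonneg _) (ebd i hi') 2
    have h2 : ∑ _i ∈ Finset.range (m+1), B^2 = ((m:ℝ)+1) * B^2 := by
      rw [Finset.sum_const, Finset.card_range, nsmul_eq_mul]
      push_cast
      ring
    linarith [h1, h2.le, h2.ge]
  have cs1 : S1^2 ≤ ((m:ℝ)+1) * ∑ i ∈ Finset.range (m+1), ‖d i‖^2 := by
    have := sq_sum_le_card_mul_sum_sq (s := Finset.range (m+1)) (f := fun i => ‖d i‖)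
    simpa [Finset.card_range] using this
  have cs2 : S2^2 ≤ ((m:ℝ)+1) * ∑ i ∈ Finset.range (m+1), ‖d (i+1) - d i‖^2 := by
    have := sq_sum_le_card_mul_sum_sq (s := Finset.range (m+1)) (f := fun i => ‖d (i+1) - d i‖)
    simpa [Finset.card_range] using this
  have hBsq : B^2 ≤ 2*(1+L)^2*S1^2 + 2*S2^2 := by nlinarith [sq_nonneg ((1+L)*S1 - S2)]
  have hm1 : (0:ℝ) ≤ (m:ℝ)+1 := by positivity
  have hL1 : (0:ℝ) ≤ (1+L)^2 := sq_nonneg _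
  set Sd := ∑ i ∈ Finset.range (m+1), ‖d i‖^2 with hSd
  set SDf := ∑ i ∈ Finset.range (m+1), ‖d (i+1) - d i‖^2 with hSDf
  have t1 := mul_le_mul_of_nonneg_left cs1 (show (0:ℝ) ≤ 2*(1+L)^2 by positivity)
  have t2 := mul_le_mul_of_nonneg_left cs2 (show (0:ℝ) ≤ 2 by norm_num)
  have h2 : B^2 ≤ 2*(1+L)^2*(((m:ℝ)+1)*Sd) + 2*(((m:ℝ)+1)*SDf) := by linarith
  calc ∑ i ∈ Finset.range (m+1), ‖e i‖^2 ≤ ((m:ℝ)+1) * B^2 := hsum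
    _ ≤ ((m:ℝ)+1) * (2*(1+L)^2*(((m:ℝ)+1)*Sd) + 2*(((m:ℝ)+1)*SDf)) :=
        mul_le_mul_of_nonneg_left h2 hm1
    _ = 2*((m:ℝ)+1)^2 * ((1+L)^2 * Sd + SDf) := by ring

/-- telescoping bound: every `d j` is controlled by `d (m+1)` plus the sum of differences -/
lemma dbound (m : ℕ) (d : ℕ → H) :
    ∀ j, j ≤ m + 1 → ‖d j‖ ≤ ‖d (m+1)‖ + ∑ i ∈ Finset.range (m+1), ‖d (i+1) - d i‖ := by
  have key : ∀ k j, j + k = m + 1 →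
      ‖d j‖ ≤ ‖d (m+1)‖ + ∑ i ∈ Finset.Ico j (m+1), ‖d (i+1) - d i‖ := by
    intro k
    induction k with
    | zero =>
      intro j hj
      have : j = m + 1 := by omega
      subst this
      simp
    | succ k ih =>
      intro j hj
      have hjlt : j < m + 1 := by omega
      have hsplit : ∑ i ∈ Finset.Ico j (m+1), ‖d (i+1) - d i‖
          = ‖d (j+1) - d j‖ + ∑ i ∈ Finset.Ico (j+1) (m+1), ‖d (i+1) - d i‖ :=
        Finset.sum_eq_sum_Ico_succ_bot hjlt _
      have tri : ‖d j‖ ≤ ‖d (j+1)‖ + ‖d (j+1) - d j‖ := by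
        have hdj : d j = d (j+1) - (d (j+1) - d j) := by abel
        calc ‖d j‖ = ‖d (j+1) - (d (j+1) - d j)‖ := by rw [← hdj]
          _ ≤ ‖d (j+1)‖ + ‖d (j+1) - d j‖ := norm_sub_le _ _
      have ihj := ih (j+1) (by omega)
      rw [hsplit]
      linarith
  intro j hj
  have h1 := key (m + 1 - j) j (by omega)
  have h2 : ∑ i ∈ Finset.Ico j (m+1), ‖d (i+1) - d i‖
      ≤ ∑ i ∈ Finset.range (m+1), ‖d (i+1) - d i‖ := by
    rw [Finset.range_eq_Ico]
    exact Finset.sum_le_sum_of_subset_of_nonneg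
      (Finset.Ico_subset_Ico (Nat.zero_le j) le_rfl) (fun _ _ _ => norm_nonneg _)
  linarith


/-- difference of MT operator outputs -/
lemma mtT_sub (J : ℕ → H → H) (m : ℕ) (γ : ℝ) (z zb : ℕ → H) (i : ℕ) :
    mtT J (m+2) γ z i - mtT J (m+2) γ zb i
      = (z i - zb i) + γ • ((mtX J (m+2) z (i+1) - mtX J (m+2) zb (i+1))
          - (mtX J (m+2) z i - mtX J (m+2) zb i)) := by
  simp only [mtT, smul_sub]
  abel

set_option maxHeartbeats 1000000 in
/-- The core contraction estimate for the MT operator. -/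
lemma core_contraction (J : ℕ → H → H) (m : ℕ) {γ : ℝ} (hγ0 : 0 < γ) (hγ1 : γ < 1)
    {L : ℝ} (hL : 0 ≤ L) (A : ℕ → H → Set H)
    (hJ : ∀ i, i < m + 2 → ∀ w : H, w - J i w ∈ A i (J i w))
    (hmono0 : ∀ i, i ≤ m + 1 → IsMonotoneOp (A i) 0)
    (hLip : ∀ i, i ≤ m → ∃ a : H → H, (∀ x, A i x = {a x}) ∧
      ∀ x y : H, ‖a x - a y‖ ≤ L * ‖x - y‖)
    (K : ℝ) (hK : 0 < K)
    (hMex : ∀ z zb : ℕ → H, ∃ M : ℝ, 0 ≤ M ∧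
      M ≤ ∑ i ∈ Finset.range (m+2), ⟪mtX J (m+2) z i - mtX J (m+2) zb i,
            (mtWin J m z i - mtX J (m+2) z i) - (mtWin J m zb i - mtX J (m+2) zb i)⟫ ∧
      ∑ i ∈ Finset.range (m+1), ‖mtX J (m+2) z i - mtX J (m+2) zb i‖^2
        ≤ K * (M + ∑ i ∈ Finset.range (m+1), ‖(mtX J (m+2) z (i+1) - mtX J (m+2) zb (i+1))
            - (mtX J (m+2) z i - mtX J (m+2) zb i)‖^2)) :
    ∃ β2 : ℝ, 0 ≤ β2 ∧ β2 < 1 ∧ ∀ z zb : ℕ → H,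
      ∑ i ∈ Finset.range (m+1), ‖mtT J (m+2) γ z i - mtT J (m+2) γ zb i‖^2
        ≤ β2 * ∑ i ∈ Finset.range (m+1), ‖z i - zb i‖^2 := by
  set τ := γ * (1 - γ) with hτdef
  have hτ : 0 < τ := by nlinarith
  set C := 2*((m:ℝ)+1)^2 * ((1+L)^2 * K + 1) with hCdef
  have hC : 0 < C := by positivity
  set C' := C + τ with hC'def
  have hC' : 0 < C' := by positivity
  refine ⟨1 - τ/C', by rw [hC'def]; rw [sub_nonneg]; rw [div_le_one hC']; linarith,
    by have : 0 < τ/C' := div_pos hτ hC'; linarith, ?_⟩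
  intro z zb
  -- abbreviations
  set d : ℕ → H := fun i => mtX J (m+2) z i - mtX J (m+2) zb i with hddef
  set e : ℕ → H := fun i => z i - zb i with hedef
  set Du : ℕ → H := fun i => (mtWin J m z i - mtX J (m+2) z i)
      - (mtWin J m zb i - mtX J (m+2) zb i) with hDudef
  obtain ⟨M, hM0, hMono, hKbd⟩ := hMex z zb
  -- formulas for Du
  have hDu0 : Du 0 = e 0 - d 0 := by
    simp only [hDudef, hedef, hddef, mtWin_zero]
    abel
  have hDumid : ∀ i, i + 1 ≤ m → Du (i+1) = (e (i+1) - e i) + (d i - d (i+1)) := by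
    intro i hi
    have h1 : mtWin J m z (i+1) = z (i+1) + mtX J (m+2) z i - z i := by
      rw [mtWin_mid J m z (by omega : 1 ≤ i + 1) hi, Nat.add_sub_cancel]
    have h2 : mtWin J m zb (i+1) = zb (i+1) + mtX J (m+2) zb i - zb i := by
      rw [mtWin_mid J m zb (by omega : 1 ≤ i + 1) hi, Nat.add_sub_cancel]
    simp only [hDudef, hedef, hddef, h1, h2]
    abel
  have hDutop : Du (m+1) = d 0 + d m - e m - d (m+1) := by
    simp only [hDudef, hedef, hddef, mtWin_top]
    abel
  -- the three-part sum
  have hthree : ∑ i ∈ Finset.range (m+2), ⟪d i, Du i⟫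
      = ⟪d 0, e 0 - d 0⟫ +
        (∑ i ∈ Finset.range m, ⟪d (i+1), (e (i+1) - e i) + (d i - d (i+1))⟫) +
        ⟪d (m+1), d 0 + d m - e m - d (m+1)⟫ := by
    rw [Finset.sum_range_succ (fun i => ⟪d i, Du i⟫) (m+1),
      Finset.sum_range_succ' (fun i => ⟪d i, Du i⟫) m]
    rw [hDu0, hDutop]
    have : ∑ i ∈ Finset.range m, ⟪d (i+1), Du (i+1)⟫
        = ∑ i ∈ Finset.range m, ⟪d (i+1), (e (i+1) - e i) + (d i - d (i+1))⟫ := by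
      apply Finset.sum_congr rfl
      intro i hi
      rw [hDumid i (Finset.mem_range.1 hi)]
    rw [this]
    ring
  have hMono' : M ≤ ∑ i ∈ Finset.range (m+2), ⟪d i, Du i⟫ := by
    simp only [hddef, hDudef]
    exact hMono
  have hMono3 : M ≤ ⟪d 0, e 0 - d 0⟫ +
      (∑ i ∈ Finset.range m, ⟪d (i+1), (e (i+1) - e i) + (d i - d (i+1))⟫) +
      ⟪d (m+1), d 0 + d m - e m - d (m+1)⟫ := by
    rw [hthree] at hMono'
    exact hMono' 
  -- step A
  have hA := stepA m hγ0 hγ1 d e M hMono3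
  -- E bound
  have hE : ∑ i ∈ Finset.range (m+1), ‖e i‖^2
      ≤ 2*((m:ℝ)+1)^2 * ((1+L)^2 * (∑ i ∈ Finset.range (m+1), ‖d i‖^2)
          + ∑ i ∈ Finset.range (m+1), ‖d (i+1) - d i‖^2) := by
    apply ebound m L hL d e Du
    · rw [hDu0]; abel
    · intro i hi; rw [hDumid i hi]; abel
    · intro i hi
      obtain ⟨a, ha, haL⟩ := hLip i hi
      have hu : mtWin J m z i - mtX J (m+2) z i ∈ A i (mtX J (m+2) z i) :=
        mtX_residual_mem J m hJ z (by omega)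
      have hub : mtWin J m zb i - mtX J (m+2) zb i ∈ A i (mtX J (m+2) zb i) :=
        mtX_residual_mem J m hJ zb (by omega)
      rw [ha _, Set.mem_singleton_iff] at hu
      rw [ha _, Set.mem_singleton_iff] at hub
      have hDui : Du i = a (mtX J (m+2) z i) - a (mtX J (m+2) zb i) := by
        simp only [hDudef, hu, hub]
      rw [hDui, hddef]
      exact haL _ _
  set SDf := ∑ i ∈ Finset.range (m+1), ‖d (i+1) - d i‖^2 with hSDfdef
  set Sd := ∑ i ∈ Finset.range (m+1), ‖d i‖^2 with hSddef
  set E := ∑ i ∈ Finset.range (m+1), ‖e i‖^2 with hEdef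
  have hSDf0 : 0 ≤ SDf := Finset.sum_nonneg fun _ _ => sq_nonneg _
  have hKbd' : Sd ≤ K * (M + SDf) := by
    rw [hSddef, hSDfdef]
    simp only [hddef]
    exact hKbd
  have hEC : E ≤ C' * (M + SDf) := by
    have h1 : (1+L)^2 * Sd ≤ (1+L)^2 * (K * (M + SDf)) :=
      mul_le_mul_of_nonneg_left hKbd' (sq_nonneg _)
    have h2' : (1+L)^2 * Sd + SDf ≤ (1+L)^2 * (K*(M+SDf)) + (M + SDf) := by linarith
    have h2 : E ≤ 2*((m:ℝ)+1)^2 * ((1+L)^2 * (K * (M+SDf)) + (M + SDf)) :=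
      le_trans hE (mul_le_mul_of_nonneg_left h2' (by positivity))
    have h3 : 2*((m:ℝ)+1)^2 * ((1+L)^2 * (K * (M+SDf)) + (M + SDf)) = C * (M + SDf) := by
      rw [hCdef]; ring
    have h4 : 0 ≤ τ * (M + SDf) := mul_nonneg (le_of_lt hτ) (by linarith)
    have h5 : C' * (M + SDf) = C * (M + SDf) + τ * (M + SDf) := by rw [hC'def]; ring
    linarith
  -- combine
  have hT : ∑ i ∈ Finset.range (m+1), ‖mtT J (m+2) γ z i - mtT J (m+2) γ zb i‖^2
      = ∑ i ∈ Finset.range (m+1), ‖e i + γ • (d (i+1) - d i)‖^2 := by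
    apply Finset.sum_congr rfl
    intro i _
    rw [mtT_sub J m γ z zb i]
  rw [hT]
  have h2γ : τ * M ≤ 2 * γ * M := by
    have h0 : 0 ≤ (2*γ - τ) * M := mul_nonneg (by rw [hτdef]; nlinarith) hM0
    linarith
  have hτE : (τ/C') * E ≤ τ * (M + SDf) := by
    rw [div_mul_eq_mul_div, div_le_iff₀ hC']
    calc τ * E ≤ τ * (C' * (M + SDf)) := mul_le_mul_of_nonneg_left hEC (le_of_lt hτ)
      _ = τ * (M + SDf) * C' := by ring
  have hfin : (1 - τ/C') * E = (1 - τ/C') * ∑ i ∈ Finset.range (m+1), ‖z i - zb i‖^2 := by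
    simp only [hEdef, hedef]
  calc ∑ i ∈ Finset.range (m+1), ‖e i + γ • (d (i+1) - d i)‖^2
      ≤ E - τ * SDf - 2*γ*M := hA
    _ ≤ E - (τ/C') * E := by linarith
    _ = (1 - τ/C') * E := by ring
    _ = (1 - τ/C') * ∑ i ∈ Finset.range (m+1), ‖z i - zb i‖^2 := hfin

/-- sum of squares bound via the top index (telescoping) -/
lemma sd_bound_top (m : ℕ) (d : ℕ → H) :
    ∑ i ∈ Finset.range (m+1), ‖d i‖^2
      ≤ 2*((m:ℝ)+1) * ‖d (m+1)‖^2
        + 2*((m:ℝ)+1)^2 * ∑ i ∈ Finset.range (m+1), ‖d (i+1) - d i‖^2 := by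
  set S2 := ∑ i ∈ Finset.range (m+1), ‖d (i+1) - d i‖ with hS2
  set SDf := ∑ i ∈ Finset.range (m+1), ‖d (i+1) - d i‖^2 with hSDf
  have cs2 : S2^2 ≤ ((m:ℝ)+1) * SDf := by
    have := sq_sum_le_card_mul_sum_sq (s := Finset.range (m+1)) (f := fun i => ‖d (i+1) - d i‖)
    simpa [Finset.card_range] using this
  have hS20 : 0 ≤ S2 := Finset.sum_nonneg fun _ _ => norm_nonneg _
  have hterm : ∀ j ∈ Finset.range (m+1), ‖d j‖^2 ≤ 2*‖d (m+1)‖^2 + 2*(((m:ℝ)+1) * SDf) := by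
    intro j hj
    have hjm : j ≤ m + 1 := by have := Finset.mem_range.1 hj; omega
    have hdb := dbound m d j hjm
    rw [← hS2] at hdb
    have h1 : ‖d j‖^2 ≤ (‖d (m+1)‖ + S2)^2 := by
      apply pow_le_pow_left₀ (norm_nonneg _) hdb
    nlinarith [cs2, norm_nonneg (d (m+1)), hS20, sq_nonneg (‖d (m+1)‖ - S2)]
  calc ∑ i ∈ Finset.range (m+1), ‖d i‖^2
      ≤ ∑ _i ∈ Finset.range (m+1), (2*‖d (m+1)‖^2 + 2*(((m:ℝ)+1) * SDf)) :=
        Finset.sum_le_sum hterm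
    _ = ((m:ℝ)+1) * (2*‖d (m+1)‖^2 + 2*(((m:ℝ)+1) * SDf)) := by
        rw [Finset.sum_const, Finset.card_range, nsmul_eq_mul]; push_cast; ring
    _ = 2*((m:ℝ)+1) * ‖d (m+1)‖^2 + 2*((m:ℝ)+1)^2 * SDf := by ring

/-- case (a): the strongly monotone operator is the last one -/
lemma hMex_caseA (J : ℕ → H → H) (m : ℕ) {μ : ℝ} (hμ : 0 < μ) (A : ℕ → H → Set H)
    (hJ : ∀ i, i < m + 2 → ∀ w : H, w - J i w ∈ A i (J i w))
    (hmono0 : ∀ i, i ≤ m → IsMonotoneOp (A i) 0)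
    (hstrong : IsMonotoneOp (A (m+1)) μ) :
    ∀ z zb : ℕ → H, ∃ M : ℝ, 0 ≤ M ∧
      M ≤ ∑ i ∈ Finset.range (m+2), ⟪mtX J (m+2) z i - mtX J (m+2) zb i,
            (mtWin J m z i - mtX J (m+2) z i) - (mtWin J m zb i - mtX J (m+2) zb i)⟫ ∧
      ∑ i ∈ Finset.range (m+1), ‖mtX J (m+2) z i - mtX J (m+2) zb i‖^2
        ≤ (2*((m:ℝ)+1)/μ + 2*((m:ℝ)+1)^2) * (M + ∑ i ∈ Finset.range (m+1),
            ‖(mtX J (m+2) z (i+1) - mtX J (m+2) zb (i+1))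
              - (mtX J (m+2) z i - mtX J (m+2) zb i)‖^2) := by
  intro z zb
  refine ⟨μ * ‖mtX J (m+2) z (m+1) - mtX J (m+2) zb (m+1)‖^2, by positivity, ?_, ?_⟩
  · rw [Finset.sum_range_succ]
    have h1 : (0:ℝ) ≤ ∑ i ∈ Finset.range (m+1), ⟪mtX J (m+2) z i - mtX J (m+2) zb i,
        (mtWin J m z i - mtX J (m+2) z i) - (mtWin J m zb i - mtX J (m+2) zb i)⟫ := by
      apply Finset.sum_nonneg
      intro i hi
      have hi' : i ≤ m := Nat.lt_succ_iff.1 (Finset.mem_range.1 hi)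
      have := hmono0 i hi' (mtX_residual_mem J m hJ z (by omega))
        (mtX_residual_mem J m hJ zb (by omega))
      simpa using this
    have h2 := hstrong (mtX_residual_mem J m hJ z (le_refl (m+1)))
      (mtX_residual_mem J m hJ zb (le_refl (m+1)))
    linarith
  · have hsd := sd_bound_top m (fun i => mtX J (m+2) z i - mtX J (m+2) zb i)
    set X := ‖mtX J (m+2) z (m+1) - mtX J (m+2) zb (m+1)‖^2 with hX
    set Y := ∑ i ∈ Finset.range (m+1), ‖(mtX J (m+2) z (i+1) - mtX J (m+2) zb (i+1))
      - (mtX J (m+2) z i - mtX J (m+2) zb i)‖^2 with hY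
    have hX0 : 0 ≤ X := by rw [hX]; positivity
    have hY0 : 0 ≤ Y := by rw [hY]; exact Finset.sum_nonneg fun _ _ => sq_nonneg _
    have h0 : (2*((m:ℝ)+1)/μ + 2*((m:ℝ)+1)^2) * (μ*X + Y)
        = (2*((m:ℝ)+1)/μ) * (μ*X + Y) + 2*((m:ℝ)+1)^2 * (μ*X + Y) := by ring
    have h1 : (2*((m:ℝ)+1)/μ) * (μ*X + Y) = 2*((m:ℝ)+1)*X + (2*((m:ℝ)+1)/μ)*Y := by
      field_simp
    have h2 : (0:ℝ) ≤ (2*((m:ℝ)+1)/μ)*Y := by positivity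
    have h3 : 2*((m:ℝ)+1)^2 * Y ≤ 2*((m:ℝ)+1)^2 * (μ*X + Y) := by
      have hmx : (0:ℝ) ≤ 2*((m:ℝ)+1)^2 * (μ*X) := by positivity
      nlinarith [hmx]
    linarith [hsd]

/-- case (b): the strongly monotone operators are the first `m+1` -/
lemma hMex_caseB (J : ℕ → H → H) (m : ℕ) {μ : ℝ} (hμ : 0 < μ) (A : ℕ → H → Set H)
    (hJ : ∀ i, i < m + 2 → ∀ w : H, w - J i w ∈ A i (J i w))
    (hstrong : ∀ i, i ≤ m → IsMonotoneOp (A i) μ)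
    (hmono0 : IsMonotoneOp (A (m+1)) 0) :
    ∀ z zb : ℕ → H, ∃ M : ℝ, 0 ≤ M ∧
      M ≤ ∑ i ∈ Finset.range (m+2), ⟪mtX J (m+2) z i - mtX J (m+2) zb i,
            (mtWin J m z i - mtX J (m+2) z i) - (mtWin J m zb i - mtX J (m+2) zb i)⟫ ∧
      ∑ i ∈ Finset.range (m+1), ‖mtX J (m+2) z i - mtX J (m+2) zb i‖^2
        ≤ (1/μ) * (M + ∑ i ∈ Finset.range (m+1),
            ‖(mtX J (m+2) z (i+1) - mtX J (m+2) zb (i+1))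
              - (mtX J (m+2) z i - mtX J (m+2) zb i)‖^2) := by
  intro z zb
  refine ⟨μ * ∑ i ∈ Finset.range (m+1), ‖mtX J (m+2) z i - mtX J (m+2) zb i‖^2,
    by positivity, ?_, ?_⟩
  · have h1 : μ * ∑ i ∈ Finset.range (m+1), ‖mtX J (m+2) z i - mtX J (m+2) zb i‖^2
        ≤ ∑ i ∈ Finset.range (m+1), ⟪mtX J (m+2) z i - mtX J (m+2) zb i,
          (mtWin J m z i - mtX J (m+2) z i) - (mtWin J m zb i - mtX J (m+2) zb i)⟫ := by
      rw [Finset.mul_sum]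
      apply Finset.sum_le_sum
      intro i hi
      have hi' : i ≤ m := Nat.lt_succ_iff.1 (Finset.mem_range.1 hi)
      exact hstrong i hi' (mtX_residual_mem J m hJ z (by omega))
        (mtX_residual_mem J m hJ zb (by omega))
    have h2 := hmono0 (mtX_residual_mem J m hJ z (le_refl (m+1)))
      (mtX_residual_mem J m hJ zb (le_refl (m+1)))
    simp only [zero_mul] at h2
    have h3 : ∑ i ∈ Finset.range (m+1), ⟪mtX J (m+2) z i - mtX J (m+2) zb i,
          (mtWin J m z i - mtX J (m+2) z i) - (mtWin J m zb i - mtX J (m+2) zb i)⟫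
        ≤ ∑ i ∈ Finset.range (m+2), ⟪mtX J (m+2) z i - mtX J (m+2) zb i,
          (mtWin J m z i - mtX J (m+2) z i) - (mtWin J m zb i - mtX J (m+2) zb i)⟫ := by
      apply Finset.sum_le_sum_of_subset_of_nonneg (Finset.range_subset_range.2 (by omega))
      intro i hi hni
      have hie : i = m + 1 := by
        have h4 := Finset.mem_range.1 hi
        have h5 : ¬ i < m + 1 := fun h => hni (Finset.mem_range.2 h)
        omega
      subst hie
      exact h2
    linarith
  · set S := ∑ i ∈ Finset.range (m+1), ‖mtX J (m+2) z i - mtX J (m+2) zb i‖^2 with hS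
    set Y := ∑ i ∈ Finset.range (m+1), ‖(mtX J (m+2) z (i+1) - mtX J (m+2) zb (i+1))
      - (mtX J (m+2) z i - mtX J (m+2) zb i)‖^2 with hY
    have hY0 : 0 ≤ Y := by rw [hY]; exact Finset.sum_nonneg fun _ _ => sq_nonneg _
    have h1 : (1/μ) * (μ * S + Y) = S + (1/μ)*Y := by field_simp
    have h2 : (0:ℝ) ≤ (1/μ)*Y := by positivity
    linarith

set_option synthInstance.maxHeartbeats 1000000 in
set_option maxHeartbeats 1000000 in
/-- Banach fixed point packaging for the contraction `T_MT`. -/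
lemma banach_package [CompleteSpace H] (m : ℕ) (γ : ℝ) (J : ℕ → H → H)
    (β2 : ℝ) (hβ0 : 0 ≤ β2) (hβ1 : β2 < 1)
    (hcontr : ∀ z zb : ℕ → H,
      ∑ i ∈ Finset.range (m+1), ‖mtT J (m+2) γ z i - mtT J (m+2) γ zb i‖^2
        ≤ β2 * ∑ i ∈ Finset.range (m+1), ‖z i - zb i‖^2)
    (zseq : ℕ → ℕ → H)
    (hzseq : ∀ k i, i < m + 1 → zseq (k+1) i = mtT J (m+2) γ (zseq k) i) :
    ∃ zstar : ℕ → H,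
      (∀ i, i < m+1 → mtT J (m+2) γ zstar i = zstar i) ∧
      (∀ w : ℕ → H, (∀ i, i < m+1 → mtT J (m+2) γ w i = w i) →
        ∀ i, i < m+1 → w i = zstar i) ∧
      ∃ c : ℝ, 0 ≤ c ∧ ∀ k, Real.sqrt (∑ i ∈ Finset.range (m+1), ‖zseq k i - zstar i‖^2)
        ≤ c * (Real.sqrt β2)^k := by
  classical
  set β := Real.sqrt β2 with hβdef
  have hβnn : 0 ≤ β := Real.sqrt_nonneg _
  have hβlt : β < 1 := by
    have h := Real.sqrt_lt_sqrt hβ0 hβ1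
    rw [Real.sqrt_one] at h
    rw [hβdef]
    exact h
  set ext : (Fin (m+1) → H) → ℕ → H :=
    fun v j => if h : j < m+1 then v ⟨j, h⟩ else 0 with hextdef
  have hext : ∀ (v : Fin (m+1) → H) (j : ℕ) (h : j < m+1), ext v j = v ⟨j, h⟩ := by
    intro v j h
    simp only [hextdef, dif_pos h]
  set F : PiLp 2 (fun _ : Fin (m+1) => H) → PiLp 2 (fun _ : Fin (m+1) => H) :=
    fun v => WithLp.toLp 2 (fun i => mtT J (m+2) γ (ext v) ↑i) with hFdef
  -- distance bound
  have hFdist : ∀ v w : PiLp 2 (fun _ : Fin (m+1) => H),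
      dist (F v) (F w) ≤ β * dist v w := by
    intro v w
    rw [dist_eq_norm, dist_eq_norm, PiLp.norm_eq_of_L2, PiLp.norm_eq_of_L2]
    have h1 : ∑ i : Fin (m+1), ‖(F v - F w) i‖^2
        = ∑ i ∈ Finset.range (m+1),
            ‖mtT J (m+2) γ (ext v) i - mtT J (m+2) γ (ext w) i‖^2 := by
      rw [← Fin.sum_univ_eq_sum_range
        (fun j => ‖mtT J (m+2) γ (ext v) j - mtT J (m+2) γ (ext w) j‖^2) (m+1)]
      exact Finset.sum_congr rfl (fun i _ => rfl)
    have h2 : ∑ i : Fin (m+1), ‖(v - w) i‖^2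
        = ∑ i ∈ Finset.range (m+1), ‖ext v i - ext w i‖^2 := by
      rw [← Fin.sum_univ_eq_sum_range (fun j => ‖ext v j - ext w j‖^2) (m+1)]
      apply Finset.sum_congr rfl
      intro i _
      congr 1
      rw [hext v ↑i i.isLt, hext w ↑i i.isLt]
      rfl
    rw [h1, h2]
    calc Real.sqrt (∑ i ∈ Finset.range (m+1),
          ‖mtT J (m+2) γ (ext v) i - mtT J (m+2) γ (ext w) i‖^2)
        ≤ Real.sqrt (β2 * ∑ i ∈ Finset.range (m+1), ‖ext v i - ext w i‖^2) :=
          Real.sqrt_le_sqrt (hcontr (ext v) (ext w))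
      _ = β * Real.sqrt (∑ i ∈ Finset.range (m+1), ‖ext v i - ext w i‖^2) := by
          rw [Real.sqrt_mul hβ0]
  have hK : ContractingWith ⟨β, hβnn⟩ F := by
    constructor
    · exact (NNReal.coe_lt_coe (r₁ := ⟨β, hβnn⟩) (r₂ := 1)).1 hβlt
    · exact LipschitzWith.of_dist_le_mul hFdist
  haveI : Nonempty (PiLp 2 (fun _ : Fin (m+1) => H)) := ⟨WithLp.toLp 2 (fun _ => 0)⟩
  haveI : CompleteSpace (PiLp 2 (fun _ : Fin (m+1) => H)) :=
    inferInstance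
  set zfixE := ContractingWith.fixedPoint F hK with hzfixdef
  have hfix : F zfixE = zfixE := ContractingWith.fixedPoint_isFixedPt hK
  refine ⟨ext zfixE, ?_, ?_, ?_⟩
  · intro i hi
    have h1 : mtT J (m+2) γ (ext zfixE) i = F zfixE ⟨i, hi⟩ := rfl
    rw [h1, hfix, hext zfixE i hi]
  · intro w hw i hi
    set wE : PiLp 2 (fun _ : Fin (m+1) => H) := WithLp.toLp 2 (fun i => w ↑i) with hwEdef
    have hwfix : F wE = wE := by
      refine PiLp.ext fun j => ?_
      have h1 : F wE j = mtT J (m+2) γ (ext wE) ↑j := rfl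
      have h2 : mtT J (m+2) γ w ↑j = mtT J (m+2) γ (ext wE) ↑j := by
        apply mtT_local J m γ w (ext wE) ↑j (Nat.lt_succ_iff.mp j.isLt)
        intro l hl
        rw [hext wE l (by omega)]
      rw [h1, ← h2, hw ↑j j.isLt]
    have hwE : wE = zfixE := ContractingWith.fixedPoint_unique hK hwfix
    rw [hext zfixE i hi, ← hwE]
  · set vk : ℕ → PiLp 2 (fun _ : Fin (m+1) => H) := fun k => WithLp.toLp 2 (fun i => zseq k ↑i) with hvkdef
    have hstep : ∀ k, vk (k+1) = F (vk k) := by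
      intro k
      refine PiLp.ext fun j => ?_
      have h1 : F (vk k) j = mtT J (m+2) γ (ext (vk k)) ↑j := rfl
      have h2 : mtT J (m+2) γ (zseq k) ↑j = mtT J (m+2) γ (ext (vk k)) ↑j := by
        apply mtT_local J m γ (zseq k) (ext (vk k)) ↑j (Nat.lt_succ_iff.mp j.isLt)
        intro l hl
        rw [hext (vk k) l (by omega)]
      have h3 : vk (k+1) j = zseq (k+1) ↑j := rfl
      rw [h3, hzseq k ↑j j.isLt, h1, ← h2]
    have hd : ∀ k, dist (vk k) zfixE ≤ β^k * dist (vk 0) zfixE := by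
      intro k
      induction k with
      | zero => simp
      | succ k ih =>
        have h1 : dist (vk (k+1)) zfixE = dist (F (vk k)) (F zfixE) := by
          rw [hstep k, hfix]
        calc dist (vk (k+1)) zfixE = dist (F (vk k)) (F zfixE) := h1
          _ ≤ β * dist (vk k) zfixE := hFdist _ _
          _ ≤ β * (β^k * dist (vk 0) zfixE) := by
              apply mul_le_mul_of_nonneg_left ih hβnn
          _ = β^(k+1) * dist (vk 0) zfixE := by ring
    refine ⟨dist (vk 0) zfixE, dist_nonneg, ?_⟩
    intro k
    have hnorm : Real.sqrt (∑ i ∈ Finset.range (m+1), ‖zseq k i - ext zfixE i‖^2)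
        = dist (vk k) zfixE := by
      rw [dist_eq_norm, PiLp.norm_eq_of_L2]
      congr 1
      rw [← Fin.sum_univ_eq_sum_range (fun j => ‖zseq k j - ext zfixE j‖^2) (m+1)]
      apply Finset.sum_congr rfl
      intro i _
      congr 1
      rw [hext zfixE ↑i i.isLt]
      rfl
    rw [hnorm]
    calc dist (vk k) zfixE ≤ β^k * dist (vk 0) zfixE := hd k
      _ = dist (vk 0) zfixE * β^k := by ring

/-- at a fixed point all shadows agree -/
lemma shadow_const (J : ℕ → H → H) (m : ℕ) {γ : ℝ} (hγ : γ ≠ 0) (zstar : ℕ → H)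
    (hfix : ∀ i, i < m + 1 → mtT J (m+2) γ zstar i = zstar i) :
    ∀ i, i ≤ m + 1 → mtX J (m+2) zstar i = mtX J (m+2) zstar 0 := by
  intro i
  induction i with
  | zero => intro _; rfl
  | succ i ih =>
    intro hi
    have h1 := hfix i (by omega)
    unfold mtT at h1
    have h2 : γ • (mtX J (m+2) zstar (i+1) - mtX J (m+2) zstar i) = 0 := by
      have := add_eq_left.mp h1
      exact this
    have h3 : mtX J (m+2) zstar (i+1) = mtX J (m+2) zstar i := by
      rcases smul_eq_zero.mp h2 with h | h
      · exact absurd h hγ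
      · exact sub_eq_zero.mp h
    rw [h3]
    exact ih (by omega)

/-- existence of a zero of the sum from the fixed point -/
lemma zero_package (J : ℕ → H → H) (m : ℕ) (A : ℕ → H → Set H)
    (hJ : ∀ i, i < m + 2 → ∀ w : H, w - J i w ∈ A i (J i w)) (zstar : ℕ → H) (xstar : H)
    (hxc : ∀ i, i ≤ m + 1 → mtX J (m+2) zstar i = xstar) :
    ∃ u : ℕ → H, (∀ i, i < m + 2 → u i ∈ A i xstar) ∧
      ∑ i ∈ Finset.range (m+2), u i = 0 := by
  classical
  refine ⟨fun i => mtWin J m zstar i - mtX J (m+2) zstar i, ?_, ?_⟩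
  · intro i hi
    rw [← hxc i (by omega)]
    exact mtX_residual_mem J m hJ zstar (by omega)
  · set g : ℕ → H := fun i => if i = 0 then xstar else if i ≤ m+1 then zstar (i-1) else xstar
      with hgdef
    have hteles : ∀ i ∈ Finset.range (m+2),
        mtWin J m zstar i - mtX J (m+2) zstar i = g (i+1) - g i := by
      intro i hi
      have him : i ≤ m + 1 := by have := Finset.mem_range.1 hi; omega
      rcases Nat.eq_or_lt_of_le him with htop | hlt
      · -- i = m+1
        rw [htop]
        have hg1 : g (m+1+1) = xstar := by
          simp only [hgdef]
          rw [if_neg (by omega), if_neg (by omega)]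
        have hg2 : g (m+1) = zstar m := by
          simp only [hgdef]
          rw [if_neg (by omega), if_pos (by omega), Nat.add_sub_cancel]
        rw [hg1, hg2, mtWin_top, hxc (m+1) le_rfl, hxc 0 (by omega), hxc m (by omega)]
        abel
      · rcases Nat.eq_zero_or_pos i with h0 | hpos
        · rw [h0]
          have hg1 : g 1 = zstar 0 := by
            simp only [hgdef]
            rw [if_neg (by omega), if_pos (by omega)]
          have hg0 : g 0 = xstar := by simp [hgdef]
          rw [hg1, hg0, mtWin_zero, hxc 0 (by omega)]
        · -- 1 ≤ i ≤ m
          have him' : i ≤ m := by omega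
          have hg1 : g (i+1) = zstar i := by
            simp only [hgdef]
            rw [if_neg (by omega), if_pos (by omega), Nat.add_sub_cancel]
          have hg2 : g i = zstar (i-1) := by
            simp only [hgdef]
            rw [if_neg (by omega), if_pos (by omega)]
          rw [hg1, hg2, mtWin_mid J m zstar hpos him', hxc i (by omega),
            hxc (i-1) (by omega)]
          abel
    rw [Finset.sum_congr rfl hteles, Finset.sum_range_sub g]
    have hgtop : g (m+2) = xstar := by
      simp only [hgdef]
      rw [if_neg (by omega), if_neg (by omega)]
    have hg0 : g 0 = xstar := by simp [hgdef]
    rw [hgtop, hg0, sub_self]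

/-- uniqueness of the zero of the sum -/
lemma zero_unique (m : ℕ) (A : ℕ → H → Set H) {μ : ℝ} (hμ : 0 < μ)
    (hmono0all : ∀ i, i ≤ m + 1 → IsMonotoneOp (A i) 0)
    (i0 : ℕ) (hi0 : i0 < m + 2) (hstrong : IsMonotoneOp (A i0) μ)
    (xstar y : H) (u u' : ℕ → H)
    (hmem : ∀ i, i < m + 2 → u i ∈ A i xstar) (hmem' : ∀ i, i < m + 2 → u' i ∈ A i y)
    (hsum : ∑ i ∈ Finset.range (m+2), u i = 0)
    (hsum' : ∑ i ∈ Finset.range (m+2), u' i = 0) : y = xstar := by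
  have htot : ∑ i ∈ Finset.range (m+2), ⟪y - xstar, u' i - u i⟫ = 0 := by
    rw [← inner_sum, Finset.sum_sub_distrib, hsum, hsum', sub_self, inner_zero_right]
  have keystrong : μ * ‖y - xstar‖^2 ≤ ⟪y - xstar, u' i0 - u i0⟫ :=
    hstrong (hmem' i0 hi0) (hmem i0 hi0)
  have herase : (0:ℝ) ≤ ∑ i ∈ (Finset.range (m+2)).erase i0, ⟪y - xstar, u' i - u i⟫ := by
    apply Finset.sum_nonneg
    intro i hi
    have hii : i < m + 2 := Finset.mem_range.1 (Finset.mem_of_mem_erase hi)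
    have := hmono0all i (by omega) (hmem' i hii) (hmem i hii)
    simpa using this
  have hsplit := Finset.sum_erase_add (Finset.range (m+2))
    (fun i => ⟪y - xstar, u' i - u i⟫) (Finset.mem_range.2 hi0)
  have h8 : ‖y - xstar‖^2 ≤ 0 := by nlinarith
  have h9 : ‖y - xstar‖^2 = 0 := le_antisymm h8 (sq_nonneg _)
  have h10 : ‖y - xstar‖ = 0 := sq_eq_zero_iff.mp h9
  exact sub_eq_zero.mp (norm_eq_zero.mp h10)

/-- nonexpansiveness propagates the `z`-error bound to the shadow sequence -/
lemma shadow_bound (J : ℕ → H → H) (m : ℕ) (A : ℕ → H → Set H)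
    (hJ : ∀ i, i < m + 2 → ∀ w : H, w - J i w ∈ A i (J i w))
    (hmono0all : ∀ i, i ≤ m + 1 → IsMonotoneOp (A i) 0)
    (zstar : ℕ → H) (xstar : H) (hxc : ∀ i, i ≤ m + 1 → mtX J (m+2) zstar i = xstar)
    (z : ℕ → H) (r : ℝ) (hr : 0 ≤ r) (hz : ∀ i, i ≤ m → ‖z i - zstar i‖ ≤ r) :
    ∀ i, i ≤ m + 1 → ‖mtX J (m+2) z i - xstar‖ ≤ (2*(i:ℝ)+1) * r := by
  have hne : ∀ i, i ≤ m+1 → ∀ w w' : H, ‖J i w - J i w'‖ ≤ ‖w - w'‖ := fun i hi =>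
    resolvent_nonexpansive (hmono0all i hi) (hJ i (by omega))
  have hxm : ∀ i, i ≤ m → mtAux J zstar i = xstar := by
    intro i hi
    rw [← mtX_of_lt J m zstar hi]
    exact hxc i (by omega)
  have haux : ∀ i, i ≤ m → ‖mtAux J z i - xstar‖ ≤ (2*(i:ℝ)+1) * r := by
    intro i
    induction i with
    | zero =>
      intro _
      have h0' : xstar = J 0 (zstar 0) := by rw [← hxm 0 (by omega)]; rfl
      have h0 : ‖mtAux J z 0 - xstar‖ ≤ ‖z 0 - zstar 0‖ := by
        rw [h0']
        exact hne 0 (by omega) (z 0) (zstar 0)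
      have := hz 0 (by omega)
      push_cast
      linarith
    | succ i ih =>
      intro hi
      have hii : i ≤ m := by omega
      have h2 : xstar = J (i+1) (zstar (i+1) + mtAux J zstar i - zstar i) := by
        rw [← hxm (i+1) hi]
        rfl
      have h3 : ‖mtAux J z (i+1) - xstar‖
          ≤ ‖(z (i+1) + mtAux J z i - z i) - (zstar (i+1) + mtAux J zstar i - zstar i)‖ := by
        rw [h2]
        exact hne (i+1) (by omega) _ _
      have h4 : (z (i+1) + mtAux J z i - z i) - (zstar (i+1) + mtAux J zstar i - zstar i)
          = ((z (i+1) - zstar (i+1)) + (mtAux J z i - mtAux J zstar i)) - (z i - zstar i) := by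
        abel
      have h5 : ‖(z (i+1) + mtAux J z i - z i) - (zstar (i+1) + mtAux J zstar i - zstar i)‖
          ≤ ‖z (i+1) - zstar (i+1)‖ + ‖mtAux J z i - mtAux J zstar i‖ + ‖z i - zstar i‖ := by
        rw [h4]
        calc ‖((z (i+1) - zstar (i+1)) + (mtAux J z i - mtAux J zstar i)) - (z i - zstar i)‖
            ≤ ‖(z (i+1) - zstar (i+1)) + (mtAux J z i - mtAux J zstar i)‖ + ‖z i - zstar i‖ :=
              norm_sub_le _ _
          _ ≤ ‖z (i+1) - zstar (i+1)‖ + ‖mtAux J z i - mtAux J zstar i‖ + ‖z i - zstar i‖ := by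
              linarith [norm_add_le (z (i+1) - zstar (i+1)) (mtAux J z i - mtAux J zstar i)]
      have h7' : ‖mtAux J z i - mtAux J zstar i‖ ≤ (2*(i:ℝ)+1) * r := by
        rw [hxm i hii]
        exact ih hii
      have h8 := hz (i+1) hi
      have h9 := hz i hii
      push_cast
      push_cast at h7'
      linarith
  intro i hi
  rcases Nat.lt_or_ge i (m+1) with hlt | hge
  · rw [mtX_of_lt J m z (by omega)]
    exact haux i (by omega)
  · have hieq : i = m + 1 := by omega
    subst hieq
    have h2 : xstar = J (m+1) (mtAux J zstar 0 + mtAux J zstar m - zstar m) := by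
      rw [← hxc (m+1) le_rfl, mtX_last]
    rw [mtX_last, h2]
    have h3 := hne (m+1) le_rfl (mtAux J z 0 + mtAux J z m - z m)
      (mtAux J zstar 0 + mtAux J zstar m - zstar m)
    have h4 : (mtAux J z 0 + mtAux J z m - z m)
        - (mtAux J zstar 0 + mtAux J zstar m - zstar m)
        = ((mtAux J z 0 - mtAux J zstar 0) + (mtAux J z m - mtAux J zstar m))
          - (z m - zstar m) := by abel
    have h5 : ‖(mtAux J z 0 + mtAux J z m - z m)
        - (mtAux J zstar 0 + mtAux J zstar m - zstar m)‖
        ≤ ‖mtAux J z 0 - mtAux J zstar 0‖ + ‖mtAux J z m - mtAux J zstar m‖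
          + ‖z m - zstar m‖ := by
      rw [h4]
      calc ‖((mtAux J z 0 - mtAux J zstar 0) + (mtAux J z m - mtAux J zstar m))
            - (z m - zstar m)‖
          ≤ ‖(mtAux J z 0 - mtAux J zstar 0) + (mtAux J z m - mtAux J zstar m)‖
            + ‖z m - zstar m‖ := norm_sub_le _ _
        _ ≤ ‖mtAux J z 0 - mtAux J zstar 0‖ + ‖mtAux J z m - mtAux J zstar m‖
            + ‖z m - zstar m‖ := by
            linarith [norm_add_le (mtAux J z 0 - mtAux J zstar 0)
              (mtAux J z m - mtAux J zstar m)]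
    have h70 : ‖mtAux J z 0 - mtAux J zstar 0‖ ≤ (2*((0:ℕ):ℝ)+1) * r := by
      rw [hxm 0 (by omega)]
      exact haux 0 (by omega)
    have h7m : ‖mtAux J z m - mtAux J zstar m‖ ≤ (2*(m:ℝ)+1) * r := by
      rw [hxm m le_rfl]
      exact haux m le_rfl
    have h9 := hz m le_rfl
    push_cast at h70 h7m ⊢
    linarith

end MT

set_option maxHeartbeats 1000000 in
/-- **Theorem 3.1**: linear convergence of the Malitsky–Tam resolvent splitting.
Under hypothesis (a) or (b), the iterates `z^{k+1} = T_MT(z^k)` converge R-linearly to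
the unique fixed point `z*` of `T_MT`, and the shadow sequence `x^k` converges
R-linearly to `(x*, …, x*)` where `x*` is the unique zero of `∑ᵢ Aᵢ`; explicitly, if
`‖z^k - z*‖ ≤ c βᵏ` then `‖xᵢ^k - x*‖ ≤ (2i-1) c βᵏ` (here `i` is 0-indexed, so the
constant reads `2i+1`). -/
theorem malitskyTam_linear_convergence
    {H : Type*} [NormedAddCommGroup H] [InnerProductSpace ℝ H] [CompleteSpace H]
    (n : ℕ) (hn : 2 ≤ n) (γ : ℝ) (hγ : γ ∈ Set.Ioo (0 : ℝ) 1)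
    (L μ : ℝ) (hL : 0 ≤ L) (hμ : 0 < μ)
    (A : ℕ → H → Set H)
    (hcase :
      -- case (a): `A 0, …, A (n-2)` maximally monotone and `L`-Lipschitz,
      -- `A (n-1)` maximally `μ`-strongly monotone
      ((∀ i, i ≤ n - 2 → IsMaxMonotoneOp (A i) 0 ∧
          ∃ a : H → H, (∀ x, A i x = {a x}) ∧ ∀ x y : H, ‖a x - a y‖ ≤ L * ‖x - y‖) ∧
        IsMaxMonotoneOp (A (n - 1)) μ) ∨
      -- case (b): `A 0, …, A (n-2)` maximally `μ`-strongly monotone and `L`-Lipschitz,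
      -- `A (n-1)` maximally monotone
      ((∀ i, i ≤ n - 2 → IsMaxMonotoneOp (A i) μ ∧
          ∃ a : H → H, (∀ x, A i x = {a x}) ∧ ∀ x y : H, ‖a x - a y‖ ≤ L * ‖x - y‖) ∧
        IsMaxMonotoneOp (A (n - 1)) 0))
    (J : ℕ → H → H)
    (hJ : ∀ i, i < n → ∀ w : H, w - J i w ∈ A i (J i w))
    (zseq : ℕ → ℕ → H)
    (hzseq : ∀ k i, i < n - 1 → zseq (k + 1) i = mtT J n γ (zseq k) i) :
    ∃ zstar : ℕ → H,
      (∀ i, i < n - 1 → mtT J n γ zstar i = zstar i) ∧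
      (∀ w : ℕ → H, (∀ i, i < n - 1 → mtT J n γ w i = w i) →
        ∀ i, i < n - 1 → w i = zstar i) ∧
      ∃ xstar : H,
        (∃ u : ℕ → H, (∀ i, i < n → u i ∈ A i xstar) ∧ ∑ i ∈ Finset.range n, u i = 0) ∧
        (∀ y : H, (∃ u : ℕ → H, (∀ i, i < n → u i ∈ A i y) ∧
            ∑ i ∈ Finset.range n, u i = 0) → y = xstar) ∧
        (∃ c : ℝ, 0 ≤ c ∧ ∃ β : ℝ, 0 ≤ β ∧ β < 1 ∧
          (∀ k, Real.sqrt (∑ i ∈ Finset.range (n - 1), ‖zseq k i - zstar i‖ ^ 2) ≤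
            c * β ^ k) ∧
          (∀ k, ∀ i, i < n →
            ‖mtX J n (zseq k) i - xstar‖ ≤ (2 * (i : ℝ) + 1) * c * β ^ k)) ∧
        (∀ c β : ℝ, 0 ≤ c → 0 ≤ β →
          (∀ k, Real.sqrt (∑ i ∈ Finset.range (n - 1), ‖zseq k i - zstar i‖ ^ 2) ≤
            c * β ^ k) →
          ∀ k, ∀ i, i < n →
            ‖mtX J n (zseq k) i - xstar‖ ≤ (2 * (i : ℝ) + 1) * c * β ^ k) := by 
  obtain ⟨m, rfl⟩ : ∃ m, n = m + 2 := ⟨n - 2, by omega⟩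
  obtain ⟨hγ0, hγ1⟩ := hγ
  simp only [show m + 2 - 1 = m + 1 from rfl, show m + 2 - 2 = m from rfl] at hcase hzseq ⊢
  -- unify the two cases
  have hpack : (∀ i, i ≤ m+1 → IsMonotoneOp (A i) 0) ∧
      (∃ i0, i0 < m + 2 ∧ IsMonotoneOp (A i0) μ) ∧
      (∃ β2 : ℝ, 0 ≤ β2 ∧ β2 < 1 ∧ ∀ z zb : ℕ → H,
        ∑ i ∈ Finset.range (m+1), ‖mtT J (m+2) γ z i - mtT J (m+2) γ zb i‖^2
          ≤ β2 * ∑ i ∈ Finset.range (m+1), ‖z i - zb i‖^2) := by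
    rcases hcase with ha | hb
    · have hmono0all : ∀ i, i ≤ m+1 → IsMonotoneOp (A i) 0 := by
        intro i hi
        rcases Nat.lt_or_ge i (m+1) with hlt | hge
        · exact (ha.1 i (by omega)).1.1
        · have : i = m + 1 := by omega
          subst this
          exact mono_zero ha.2.1 hμ.le
      refine ⟨hmono0all, ⟨m+1, by omega, ha.2.1⟩, ?_⟩
      exact core_contraction J m hγ0 hγ1 hL A hJ hmono0all
        (fun i hi => (ha.1 i hi).2)
        (2*((m:ℝ)+1)/μ + 2*((m:ℝ)+1)^2) (by positivity)
        (hMex_caseA J m hμ A hJ (fun i hi => (ha.1 i hi).1.1) ha.2.1)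
    · have hmono0all : ∀ i, i ≤ m+1 → IsMonotoneOp (A i) 0 := by
        intro i hi
        rcases Nat.lt_or_ge i (m+1) with hlt | hge
        · exact mono_zero (hb.1 i (by omega)).1.1 hμ.le
        · have : i = m + 1 := by omega
          subst this
          exact hb.2.1
      refine ⟨hmono0all, ⟨0, by omega, (hb.1 0 (by omega)).1.1⟩, ?_⟩
      exact core_contraction J m hγ0 hγ1 hL A hJ hmono0all
        (fun i hi => (hb.1 i hi).2)
        (1/μ) (by positivity)
        (hMex_caseB J m hμ A hJ (fun i hi => (hb.1 i hi).1.1) hb.2.1)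
  obtain ⟨hmono0all, ⟨i0, hi0lt, hstrongOne⟩, β2, hβ20, hβ21, hcontr⟩ := hpack
  obtain ⟨zstar, hfix, huniq, c, hc0, hconv⟩ :=
    banach_package m γ J β2 hβ20 hβ21 hcontr zseq hzseq
  have hxc : ∀ i, i ≤ m+1 → mtX J (m+2) zstar i = mtX J (m+2) zstar 0 :=
    shadow_const J m (ne_of_gt hγ0) zstar hfix
  set xstar := mtX J (m+2) zstar 0 with hxstardef
  obtain ⟨u, humem, husum⟩ := zero_package J m A hJ zstar xstar hxc
  -- the general shadow bound
  have main : ∀ (c' β' : ℝ), 0 ≤ c' → 0 ≤ β' →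
      (∀ k, Real.sqrt (∑ i ∈ Finset.range (m+1), ‖zseq k i - zstar i‖ ^ 2) ≤ c' * β' ^ k) →
      ∀ k, ∀ i, i < m + 2 →
        ‖mtX J (m+2) (zseq k) i - xstar‖ ≤ (2 * (i : ℝ) + 1) * c' * β' ^ k := by
    intro c' β' hc' hβ' hb k i hi
    have hr : (0:ℝ) ≤ c' * β'^k := by positivity
    have hz : ∀ j, j ≤ m → ‖zseq k j - zstar j‖ ≤ c' * β'^k := by
      intro j hj
      have h1 : ‖zseq k j - zstar j‖^2 ≤ ∑ i ∈ Finset.range (m+1), ‖zseq k i - zstar i‖^2 :=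
        Finset.single_le_sum (f := fun l => ‖zseq k l - zstar l‖^2)
          (fun l _ => sq_nonneg _) (Finset.mem_range.2 (by omega))
      calc ‖zseq k j - zstar j‖ = Real.sqrt (‖zseq k j - zstar j‖^2) :=
            (Real.sqrt_sq (norm_nonneg _)).symm
        _ ≤ Real.sqrt (∑ i ∈ Finset.range (m+1), ‖zseq k i - zstar i‖^2) :=
            Real.sqrt_le_sqrt h1
        _ ≤ c' * β'^k := hb k
    have := shadow_bound J m A hJ hmono0all zstar xstar hxc (zseq k) (c' * β'^k) hr hz
      i (by omega)
    calc ‖mtX J (m+2) (zseq k) i - xstar‖ ≤ (2*(i:ℝ)+1) * (c' * β'^k) := this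
      _ = (2*(i:ℝ)+1) * c' * β'^k := by ring
  refine ⟨zstar, hfix, huniq, xstar, ⟨u, humem, husum⟩, ?_, ?_, ?_⟩
  · rintro y ⟨u', hmem', hsum'⟩
    exact zero_unique m A hμ hmono0all i0 hi0lt hstrongOne xstar y u u' humem hmem'
      husum hsum'
  · exact ⟨c, hc0, Real.sqrt β2, Real.sqrt_nonneg _,
      by
        have h := Real.sqrt_lt_sqrt hβ20 hβ21
        rwa [Real.sqrt_one] at h,
      hconv, main c (Real.sqrt β2) hc0 (Real.sqrt_nonneg _) hconv⟩
  · exact fun c' β' hc' hβ' hb => main c' β' hc' hβ' hb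
end
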